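/- arXiv:1205.2569 — 5 statements merged into one kernel-verified Lean document; each statement's English description precedes it below -/
import Mathlib

section
/- Let G be a finite abelian group of order n where n ≡ 2 (mod 4), and let G' be a simple graph on n vertices. Then there is no edge labelling f : E(G') → G such that the weighted degrees w(v) = Σ_{e ∋ v} f(e) are pairwise distinct (i.e., every edge labelling of G' by G leaves two vertices with equal weighted degree). -/
open Finset

-- auxiliary: sum of all elements of a finite abelian group of order ≡ 2 mod 4 is the unique
-- element of order 2; in particular its "odd multiple" is nonzero.
lemma sum_univ_eq_two_torsion_aux {A : Type} [AddCommGroup A] [Fintype A] (n : ℕ)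
    (hA : Fintype.card A = n) (hmod : n % 4 = 2) :
    ∃ g : A, (∑ a : A, a) = g ∧ addOrderOf g = 2 ∧ g ≠ 0 := by
  classical
  obtain ⟨g, hg⟩ := exists_prime_addOrderOf_dvd_card 2 (by rw [hA]; omega)
  have hgne : g ≠ 0 := by
    intro h; rw [h, addOrderOf_zero] at hg; omega
  have hgg : g + g = 0 := by
    have := addOrderOf_nsmul_eq_zero g
    rw [hg, two_nsmul] at this; exact this
  refine ⟨g, ?_, hg, hgne⟩
  -- subgroup of elements of order dividing 2
  set T : AddSubgroup A :=
    { carrier := {a | a + a = 0}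
      zero_mem' := by simp
      add_mem' := by
        intro a b ha hb
        simp only [Set.mem_setOf_eq] at *
        rw [add_add_add_comm, ha, hb, add_zero]
      neg_mem' := by
        intro a ha
        simp only [Set.mem_setOf_eq] at *
        rw [← neg_add, ha, neg_zero] } with hT
  have hmemT : ∀ a : A, a ∈ T ↔ a + a = 0 := fun a => Iff.rfl
  have hp : IsPGroup 2 (Multiplicative T) := by
    intro x
    refine ⟨1, ?_⟩
    have hx : (x.toAdd : A) + (x.toAdd : A) = 0 := x.toAdd.2
    have h2 : x.toAdd + x.toAdd = 0 := Subtype.ext (by simpa using hx)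
    apply Multiplicative.toAdd.injective
    simpa [pow_two] using h2
  have : Fact (Nat.Prime 2) := ⟨Nat.prime_two⟩
  obtain ⟨k, hk⟩ := IsPGroup.iff_card.mp hp
  have hcardT : Nat.card T = 2 ^ k := by
    rwa [Nat.card_congr Multiplicative.toAdd] at hk
  have hdvd : Nat.card T ∣ n := by
    have := AddSubgroup.card_addSubgroup_dvd_card T
    rwa [Nat.card_eq_fintype_card (α := A), hA] at this
  have hkle : k ≤ 1 := by
    by_contra hk2
    push_neg at hk2
    have h4 : 4 ∣ 2 ^ k := by
      have : (2:ℕ) ^ 2 ∣ 2 ^ k := pow_dvd_pow 2 hk2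
      simpa using this
    have : (4:ℕ) ∣ n := dvd_trans h4 (hcardT ▸ hdvd)
    omega
  have hTle : Nat.card T ≤ 2 := by
    rw [hcardT]
    calc (2:ℕ) ^ k ≤ 2 ^ 1 := Nat.pow_le_pow_right (by norm_num) hkle
    _ = 2 := by norm_num
  set K : Finset A := univ.filter (fun a => a + a = 0) with hK
  have hcardK : K.card = Fintype.card T := by
    rw [Fintype.card_subtype]
    congr 1
  have hKle : K.card ≤ 2 := by
    rw [hcardK, ← Nat.card_eq_fintype_card]
    exact hTle
  have hsub : ({0, g} : Finset A) ⊆ K := by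
    intro a ha
    simp only [mem_insert, mem_singleton] at ha
    rcases ha with rfl | rfl <;> simp [hK, hgg]
  have hKeq : ({0, g} : Finset A) = K := by
    apply Finset.eq_of_subset_of_card_le hsub
    rwa [Finset.card_pair (Ne.symm hgne)]
  have hsum1 : ∑ a ∈ K, a = g := by
    rw [← hKeq, Finset.sum_pair (Ne.symm hgne), zero_add]
  have hsum2 : ∑ a ∈ univ.filter (fun a : A => ¬ (a + a = 0)), a = 0 := by
    apply Finset.sum_involution (fun a _ => -a)
    · intro a _; exact add_neg_cancel a
    · intro a ha _ h
      apply (mem_filter.mp ha).2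
      have h2 := neg_add_cancel a
      rwa [h] at h2
    · intro a _; exact neg_neg a
    · intro a ha
      simp only [mem_filter, mem_univ, true_and] at ha ⊢
      intro h; apply ha
      rw [← neg_add] at h
      exact neg_eq_zero.mp h
  calc ∑ a : A, a = (∑ a ∈ K, a) + ∑ a ∈ univ.filter (fun a : A => ¬ (a + a = 0)), a := by
        rw [hK]; exact (Finset.sum_filter_add_sum_filter_not univ _ _).symm
  _ = g := by rw [hsum1, hsum2, add_zero]


/-- If `A` is a finite abelian group of order `n ≡ 2 (mod 4)` and `G'` is a simple graph on
`n` vertices, then no edge labelling `f : E(G') → A` makes the weighted degrees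
`w(v) = ∑_{e ∋ v} f(e)` pairwise distinct. -/
theorem no_irregular_labelling_of_card_mod_four_eq_two
    {V A : Type} [Fintype V] [DecidableEq V] [AddCommGroup A] [Fintype A]
    (n : ℕ) (hV : Fintype.card V = n) (hA : Fintype.card A = n) (hmod : n % 4 = 2)
    (G' : SimpleGraph V) [DecidableRel G'.Adj] (f : Sym2 V → A) :
    ¬ Function.Injective (fun v : V => ∑ u ∈ G'.neighborFinset v, f s(v, u)) := by
  classical
  intro hinj
  set w : V → A := fun v => ∑ u ∈ G'.neighborFinset v, f s(v, u) with hw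
  have hbij : Function.Bijective w :=
    (Fintype.bijective_iff_injective_and_card w).2 ⟨hinj, by rw [hV, hA]⟩
  obtain ⟨g, hsg, hg2, hgne⟩ := sum_univ_eq_two_torsion_aux n hA hmod
  have hsum : ∑ v, w v = ∑ a : A, a := Fintype.sum_bijective w hbij w id (fun x => rfl)
  set m := n / 2 with hm
  have hn2 : n = m + m := by omega
  have hmodd : m % 2 = 1 := by omega
  -- the sum of all weighted degrees, multiplied by m, vanishes
  have hms : m • (∑ a : A, a) = 0 := by
    rw [← hsum, Finset.smul_sum]
    have hsmul : ∀ v : V, m • w v = ∑ u ∈ G'.neighborFinset v, m • f s(v, u) :=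
      fun v => Finset.smul_sum
    rw [Finset.sum_congr rfl (fun v _ => hsmul v)]
    set P : Finset (V × V) :=
      (univ ×ˢ univ).filter (fun p => G'.Adj p.1 p.2) with hP
    have hPsum : ∑ p ∈ P, (m • f s(p.1, p.2))
        = ∑ v, ∑ u ∈ G'.neighborFinset v, m • f s(v, u) := by
      apply Finset.sum_finset_product
      intro p
      simp [hP, SimpleGraph.mem_neighborFinset]
    rw [← hPsum]
    apply Finset.sum_involution (fun p _ => p.swap)
    · intro p _
      have hs : s(p.swap.1, p.swap.2) = s(p.1, p.2) := by
        simp [Sym2.eq_swap]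
      rw [hs, ← add_nsmul, ← hn2, ← hA]
      exact card_nsmul_eq_zero
    · intro p hp _ h
      have hadj : G'.Adj p.1 p.2 := (Finset.mem_filter.mp hp).2
      have hne : p.1 ≠ p.2 := G'.ne_of_adj hadj
      apply hne
      have := congrArg Prod.fst h
      simpa using this.symm
    · intro p _; exact Prod.swap_swap p
    · intro p hp
      have hadj : G'.Adj p.1 p.2 := (Finset.mem_filter.mp hp).2
      simp [hP, hadj.symm]
  -- but that multiple equals `g ≠ 0`
  rw [hsg] at hms
  have : m • g = g := by
    have h1 := mod_addOrderOf_nsmul g m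
    rw [hg2, hmodd, one_nsmul] at h1
    exact h1.symm
  rw [this] at hms
  exact hgne hms
end

section
/- Let G be a finite abelian group whose set of involutions together with 0 is I, with |I| = 2^k and k ≥ 2. Then for any r with 0 ≤ r ≤ 2^k, there exists a subset R ⊆ I with |R| = r and Σ_{i∈R} i = 0 if and only if r ∉ {2, 2^k − 2}. -/
open Finset

namespace InvolAux

variable {A : Type} [AddCommGroup A] [DecidableEq A]

lemma quad_step (a b : A) (ha : a + a = 0) (hb : b + b = 0)
    (ha0 : a ≠ 0) (hb0 : b ≠ 0) (hab : a ≠ b)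
    (S : Finset A) (htor : ∀ z ∈ S, z + z = 0)
    (hcl : ∀ z ∈ S, z + a ∈ S ∧ z + b ∈ S)
    (x : A) (hx : x ∈ S) :
    ({x, x + a, x + b, x + a + b} : Finset A) ⊆ S ∧
      ({x, x + a, x + b, x + a + b} : Finset A).card = 4 ∧
      (∑ z ∈ ({x, x + a, x + b, x + a + b} : Finset A), z = 0) ∧
      (∀ z ∈ ({x, x + a, x + b, x + a + b} : Finset A),
        z + a ∈ ({x, x + a, x + b, x + a + b} : Finset A) ∧
        z + b ∈ ({x, x + a, x + b, x + a + b} : Finset A)) := by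
  have hab0 : a + b ≠ 0 := by
    intro h
    have h1 : -a = b := neg_eq_of_add_eq_zero_right h
    have h2 : -a = a := neg_eq_of_add_eq_zero_right ha
    exact hab (h2 ▸ h1)
  have d1 : x ≠ x + a := fun h => ha0 (left_eq_add.mp h)
  have d2 : x ≠ x + b := fun h => hb0 (left_eq_add.mp h)
  have d3 : x ≠ x + a + b := by
    rw [add_assoc]; exact fun h => hab0 (left_eq_add.mp h)
  have d4 : x + a ≠ x + b := fun h => hab (add_left_cancel h)
  have d5 : x + a ≠ x + a + b := fun h => hb0 (left_eq_add.mp h)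
  have e5 : x + b + a = x + a + b := by abel
  have d6 : x + b ≠ x + a + b := by
    rw [← e5]; exact fun h => ha0 (left_eq_add.mp h)
  have e1 : x + a + a = x := by rw [add_assoc, ha, add_zero]
  have e2 : x + b + b = x := by rw [add_assoc, hb, add_zero]
  have e3 : x + a + b + a = x + b := by
    have h : x + a + b + a = x + b + (a + a) := by abel
    rw [h, ha, add_zero]
  have e4 : x + a + b + b = x + a := by rw [add_assoc, hb, add_zero]
  refine ⟨?_, ?_, ?_, ?_⟩
  · intro z hz
    simp only [mem_insert, mem_singleton] at hz
    rcases hz with rfl | rfl | rfl | rfl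
    · exact hx
    · exact (hcl x hx).1
    · exact (hcl x hx).2
    · exact (hcl _ (hcl x hx).1).2
  · rw [card_insert_of_notMem (by simp [d1, d2, d3]),
      card_insert_of_notMem (by simp [d4, d5]),
      card_insert_of_notMem (by simp [d6]), card_singleton]
  · rw [sum_insert (by simp [d1, d2, d3]), sum_insert (by simp [d4, d5]),
      sum_insert (by simp [d6]), sum_singleton]
    have h : x + (x + a + (x + b + (x + a + b))) =
        (x + x) + ((x + x) + ((a + a) + (b + b))) := by abel
    rw [h, htor x hx, ha, hb]; simp
  · intro w hw
    simp only [mem_insert, mem_singleton] at hw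
    rcases hw with rfl | rfl | rfl | rfl <;>
      simp [mem_insert, mem_singleton, e1, e2, e3, e4, e5]

lemma sdiff_closed (a b : A) (ha : a + a = 0) (hb : b + b = 0)
    (S U : Finset A)
    (hS : ∀ z ∈ S, z + a ∈ S ∧ z + b ∈ S)
    (hU : ∀ z ∈ U, z + a ∈ U ∧ z + b ∈ U) :
    ∀ z ∈ S \ U, z + a ∈ S \ U ∧ z + b ∈ S \ U := by
  intro z hz
  rw [mem_sdiff] at hz
  constructor <;> rw [mem_sdiff]
  · refine ⟨(hS z hz.1).1, fun h => hz.2 ?_⟩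
    have := (hU _ h).1
    rwa [add_assoc z a a, ha, add_zero] at this
  · refine ⟨(hS z hz.1).2, fun h => hz.2 ?_⟩
    have := (hU _ h).2
    rwa [add_assoc z b b, hb, add_zero] at this

lemma union_closed (a b : A) (S U : Finset A)
    (hS : ∀ z ∈ S, z + a ∈ S ∧ z + b ∈ S)
    (hU : ∀ z ∈ U, z + a ∈ U ∧ z + b ∈ U) :
    ∀ z ∈ S ∪ U, z + a ∈ S ∪ U ∧ z + b ∈ S ∪ U := by
  intro z hz
  rw [mem_union] at hz
  rcases hz with hz | hz
  · exact ⟨mem_union_left _ (hS z hz).1, mem_union_left _ (hS z hz).2⟩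
  · exact ⟨mem_union_right _ (hU z hz).1, mem_union_right _ (hU z hz).2⟩

lemma disj_of_closed (a b : A) (ha : a + a = 0) (hb : b + b = 0)
    (U : Finset A) (hU : ∀ z ∈ U, z + a ∈ U ∧ z + b ∈ U)
    (x : A) (hx : x ∉ U) :
    Disjoint U ({x, x + a, x + b, x + a + b} : Finset A) := by
  rw [disjoint_right]
  intro z hzQ hzU
  apply hx
  simp only [mem_insert, mem_singleton] at hzQ
  rcases hzQ with rfl | rfl | rfl | rfl
  · exact hzU
  · have := (hU _ hzU).1
    rwa [add_assoc x a a, ha, add_zero] at this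
  · have := (hU _ hzU).2
    rwa [add_assoc x b b, hb, add_zero] at this
  · have h1 := (hU _ hzU).1
    have h2 := (hU _ h1).2
    have e : x + a + b + a + b = x + ((a + a) + (b + b)) := by abel
    rwa [e, ha, hb, add_zero, add_zero] at h2

lemma kcl_sum (a b : A) (ha : a + a = 0) (hb : b + b = 0)
    (ha0 : a ≠ 0) (hb0 : b ≠ 0) (hab : a ≠ b) :
    ∀ (n : ℕ) (S : Finset A), S.card = n → (∀ z ∈ S, z + z = 0) →
      (∀ z ∈ S, z + a ∈ S ∧ z + b ∈ S) → (∑ z ∈ S, z = 0 ∧ 4 ∣ S.card) := by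
  intro n
  induction n using Nat.strong_induction_on with
  | _ n ih =>
    intro S hn htor hcl
    rcases S.eq_empty_or_nonempty with rfl | ⟨x, hx⟩
    · simp
    · obtain ⟨hQsub, hQ4, hQsum, hQcl⟩ := quad_step a b ha hb ha0 hb0 hab S htor hcl x hx
      set Q : Finset A := {x, x + a, x + b, x + a + b} with hQ
      have hle : Q.card ≤ S.card := card_le_card hQsub
      have hcS : (S \ Q).card = S.card - 4 := by rw [card_sdiff_of_subset hQsub, hQ4]
      have hlt : (S \ Q).card < n := by omega
      have htor' : ∀ z ∈ S \ Q, z + z = 0 := fun z hz => htor z (mem_sdiff.mp hz).1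
      have hScl := sdiff_closed a b ha hb S Q hcl hQcl
      obtain ⟨hsum', hdvd'⟩ := ih _ hlt (S \ Q) rfl htor' hScl
      constructor
      · rw [← sum_sdiff hQsub, hsum', hQsum, add_zero]
      · omega

lemma kcl_extract (a b : A) (ha : a + a = 0) (hb : b + b = 0)
    (ha0 : a ≠ 0) (hb0 : b ≠ 0) (hab : a ≠ b) :
    ∀ (q : ℕ) (S : Finset A), (∀ z ∈ S, z + z = 0) →
      (∀ z ∈ S, z + a ∈ S ∧ z + b ∈ S) → 4 * q ≤ S.card →
      ∃ T ⊆ S, (T.card = 4 * q ∧ ∑ z ∈ T, z = 0) := by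
  intro q
  induction q with
  | zero => exact fun S _ _ _ => ⟨∅, by simp⟩
  | succ q ih =>
    intro S htor hcl hle
    have hne : S.Nonempty := card_pos.mp (by omega)
    obtain ⟨x, hx⟩ := hne
    obtain ⟨hQsub, hQ4, hQsum, hQcl⟩ := quad_step a b ha hb ha0 hb0 hab S htor hcl x hx
    set Q : Finset A := {x, x + a, x + b, x + a + b} with hQ
    have hcS : (S \ Q).card = S.card - 4 := by rw [card_sdiff_of_subset hQsub, hQ4]
    have htor' : ∀ z ∈ S \ Q, z + z = 0 := fun z hz => htor z (mem_sdiff.mp hz).1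
    have hScl := sdiff_closed a b ha hb S Q hcl hQcl
    obtain ⟨T, hTsub, hTcard, hTsum⟩ := ih (S \ Q) htor' hScl (by omega)
    have hdisj : Disjoint T Q := (sdiff_disjoint (t := S) (s := Q)).mono_left hTsub
    refine ⟨T ∪ Q, ?_, ?_, ?_⟩
    · exact union_subset (hTsub.trans sdiff_subset) hQsub
    · rw [card_union_of_disjoint hdisj, hTcard, hQ4]; ring
    · rw [sum_union hdisj, hTsum, hQsum, add_zero]

end InvolAux

open InvolAux in
/-- Let `I` be the set of involutions of a finite abelian group together with `0`, with
`|I| = 2^k`, `k ≥ 2`. For `0 ≤ r ≤ 2^k`, there is `R ⊆ I` with `|R| = r` and `∑_{i∈R} i = 0`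
iff `r ∉ {2, 2^k − 2}`. -/
theorem exists_subset_involutions_sum_zero_iff
    {A : Type} [AddCommGroup A] [Fintype A] [DecidableEq A]
    (k : ℕ) (hk : 2 ≤ k)
    (I : Finset A) (hI : I = Finset.univ.filter (fun i => i + i = 0))
    (hcard : I.card = 2 ^ k)
    (r : ℕ) (hr : r ≤ 2 ^ k) :
    (∃ R ⊆ I, R.card = r ∧ ∑ i ∈ R, i = 0) ↔ (r ≠ 2 ∧ r ≠ 2 ^ k - 2) := by
  have hmem : ∀ x : A, x ∈ I ↔ x + x = 0 := by
    intro x; rw [hI]; simp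
  have h0I : (0 : A) ∈ I := (hmem 0).mpr (by simp)
  have h4le : 4 ≤ I.card := by
    rw [hcard]
    calc (4:ℕ) = 2 ^ 2 := by norm_num
    _ ≤ 2 ^ k := Nat.pow_le_pow_right (by norm_num) hk
  have h4dvd : (4:ℕ) ∣ 2 ^ k := by
    have h : (2:ℕ) ^ 2 ∣ 2 ^ k := pow_dvd_pow 2 hk
    simpa using h
  have hea : (I.erase 0).Nonempty := by
    rw [← card_pos, card_erase_of_mem h0I]; omega
  obtain ⟨a, haE⟩ := hea
  obtain ⟨ha0, haI⟩ := mem_erase.mp haE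
  have heb : ((I.erase 0).erase a).Nonempty := by
    rw [← card_pos, card_erase_of_mem haE, card_erase_of_mem h0I]; omega
  obtain ⟨b, hbE⟩ := heb
  have hba : b ≠ a := (mem_erase.mp hbE).1
  obtain ⟨hb0, hbI⟩ := mem_erase.mp (mem_erase.mp hbE).2
  have hab : a ≠ b := hba.symm
  have ha : a + a = 0 := (hmem a).mp haI
  have hb : b + b = 0 := (hmem b).mp hbI
  have hab0 : a + b ≠ 0 := by
    intro h
    have h1 : -a = b := neg_eq_of_add_eq_zero_right h
    have h2 : -a = a := neg_eq_of_add_eq_zero_right ha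
    exact hab (h2 ▸ h1)
  have htorI : ∀ z ∈ I, z + z = 0 := fun z hz => (hmem z).mp hz
  have hclI : ∀ z ∈ I, z + a ∈ I ∧ z + b ∈ I := by
    intro z hz
    constructor <;> rw [hmem]
    · have e : z + a + (z + a) = (z + z) + (a + a) := by abel
      rw [e, htorI z hz, ha, add_zero]
    · have e : z + b + (z + b) = (z + z) + (b + b) := by abel
      rw [e, htorI z hz, hb, add_zero]
  have hIsum : ∑ z ∈ I, z = 0 :=
    (kcl_sum a b ha hb ha0 hb0 hab I.card I rfl htorI hclI).1
  constructor
  · rintro ⟨R, hRI, hRcard, hRsum⟩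
    have key : ∀ D : Finset A, D ⊆ I → D.card = 2 → ∑ z ∈ D, z = 0 → False := by
      intro D hDI hD2 hDsum
      obtain ⟨u, v, huv, rfl⟩ := card_eq_two.mp hD2
      rw [sum_pair huv] at hDsum
      have hu : u + u = 0 := htorI u (hDI (mem_insert_self u {v}))
      have h1 : -u = v := neg_eq_of_add_eq_zero_right hDsum
      have h2 : -u = u := neg_eq_of_add_eq_zero_right hu
      exact huv (h2 ▸ h1)
    constructor
    · rintro rfl; exact key R hRI hRcard hRsum
    · rintro rfl
      refine key (I \ R) sdiff_subset ?_ ?_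
      · rw [card_sdiff_of_subset hRI, hcard, hRcard]; omega
      · have h := sum_sdiff (f := fun z => z) hRI
        rw [hRsum, add_zero, hIsum] at h
        exact h
  · rintro ⟨h2, h2k⟩
    obtain ⟨hK0sub, hK0card, hK0sum, hK0cl⟩ :=
      quad_step a b ha hb ha0 hb0 hab I htorI hclI 0 h0I
    set K : Finset A := {0, 0 + a, 0 + b, 0 + a + b} with hKdef
    have hS1cl := sdiff_closed a b ha hb I K hclI hK0cl
    have htorS1 : ∀ z ∈ I \ K, z + z = 0 := fun z hz => htorI z (mem_sdiff.mp hz).1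
    have hS1card : (I \ K).card = 2 ^ k - 4 := by rw [card_sdiff_of_subset hK0sub, hK0card, hcard]
    obtain ⟨q, hq⟩ : ∃ q, r = 4 * q ∨ r = 4 * q + 1 ∨ r = 4 * q + 2 ∨ r = 4 * q + 3 :=
      ⟨r / 4, by omega⟩
    rcases hq with hq | hq | hq | hq
    · -- r = 4q
      obtain ⟨T, hTsub, hTcard, hTsum⟩ :=
        kcl_extract a b ha hb ha0 hb0 hab q I htorI hclI (by rw [hcard]; omega)
      exact ⟨T, hTsub, by rw [hTcard, hq], hTsum⟩
    · -- r = 4q + 1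
      obtain ⟨T, hTsub, hTcard, hTsum⟩ :=
        kcl_extract a b ha hb ha0 hb0 hab q (I \ K) htorS1 hS1cl (by rw [hS1card]; omega)
      have h0T : (0:A) ∉ T := fun h => (mem_sdiff.mp (hTsub h)).2 (by simp [hKdef])
      refine ⟨insert 0 T, ?_, ?_, ?_⟩
      · intro z hz
        rcases mem_insert.mp hz with rfl | hz
        · exact h0I
        · exact (mem_sdiff.mp (hTsub hz)).1
      · rw [card_insert_of_notMem h0T, hTcard]; omega
      · rw [sum_insert h0T, hTsum, add_zero]
    · -- r = 4q + 2
      have hq1 : 1 ≤ q := by omega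
      have hrub : r + 6 ≤ 2 ^ k := by omega
      have hS1ne : (I \ K).Nonempty := by rw [← card_pos, hS1card]; omega
      obtain ⟨x, hxS1⟩ := hS1ne
      obtain ⟨hxI, hxK⟩ := mem_sdiff.mp hxS1
      obtain ⟨hQxsub, hQxcard, hQxsum, hQxcl⟩ :=
        quad_step a b ha hb ha0 hb0 hab I htorI hclI x hxI
      set Qx : Finset A := {x, x + a, x + b, x + a + b} with hQxdef
      have hdKQx : Disjoint K Qx := disj_of_closed a b ha hb K hK0cl x hxK
      have hU1cl := union_closed a b K Qx hK0cl hQxcl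
      have hU1sub : K ∪ Qx ⊆ I := union_subset hK0sub hQxsub
      have hU1card : (K ∪ Qx).card = 8 := by
        rw [card_union_of_disjoint hdKQx, hK0card, hQxcard]
      have hS2ne : (I \ (K ∪ Qx)).Nonempty := by
        rw [← card_pos, card_sdiff_of_subset hU1sub, hU1card, hcard]; omega
      obtain ⟨y, hyS2⟩ := hS2ne
      obtain ⟨hyI, hyU1⟩ := mem_sdiff.mp hyS2
      obtain ⟨hQysub, hQycard, hQysum, hQycl⟩ :=
        quad_step a b ha hb ha0 hb0 hab I htorI hclI y hyI
      set Qy : Finset A := {y, y + a, y + b, y + a + b} with hQydef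
      have hdU1Qy : Disjoint (K ∪ Qx) Qy := disj_of_closed a b ha hb (K ∪ Qx) hU1cl y hyU1
      set U : Finset A := K ∪ Qx ∪ Qy with hUdef
      have hUcl := union_closed a b (K ∪ Qx) Qy hU1cl hQycl
      have hUsub : U ⊆ I := union_subset hU1sub hQysub
      have hUcard : U.card = 12 := by
        rw [hUdef, card_union_of_disjoint hdU1Qy, hU1card, hQycard]
      have hS3cl := sdiff_closed a b ha hb I U hclI hUcl
      have htorS3 : ∀ z ∈ I \ U, z + z = 0 := fun z hz => htorI z (mem_sdiff.mp hz).1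
      have hS3card : (I \ U).card = 2 ^ k - 12 := by rw [card_sdiff_of_subset hUsub, hUcard, hcard]
      obtain ⟨T, hTsub, hTcard, hTsum⟩ :=
        kcl_extract a b ha hb ha0 hb0 hab (q - 1) (I \ U) htorS3 hS3cl
          (by rw [hS3card]; omega)
      have hxQx : x ∈ Qx := by simp [hQxdef]
      have hxbQx : x + b ∈ Qx := by simp [hQxdef]
      have hyQy : y ∈ Qy := by simp [hQydef]
      have hyabQy : y + a + b ∈ Qy := by simp [hQydef]
      have h0K : (0:A) ∈ K := by simp [hKdef]
      have haK : a ∈ K := by simp [hKdef]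
      have neKQx : ∀ u ∈ K, ∀ v ∈ Qx, u ≠ v :=
        fun u hu v hv h => disjoint_left.mp hdKQx hu (h ▸ hv)
      have neKQy : ∀ u ∈ K, ∀ v ∈ Qy, u ≠ v :=
        fun u hu v hv h => disjoint_left.mp hdU1Qy (mem_union_left _ hu) (h ▸ hv)
      have neQxQy : ∀ u ∈ Qx, ∀ v ∈ Qy, u ≠ v :=
        fun u hu v hv h => disjoint_left.mp hdU1Qy (mem_union_right _ hu) (h ▸ hv)
      have n0a : (0:A) ≠ a := Ne.symm ha0
      have nxxb : x ≠ x + b := fun h => hb0 (left_eq_add.mp h)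
      have nyyab : y ≠ y + a + b := by
        rw [add_assoc]; exact fun h => hab0 (left_eq_add.mp h)
      have m1 : (0:A) ∉ ({a, x, x + b, y, y + a + b} : Finset A) := by
        simp only [mem_insert, mem_singleton]
        push_neg
        exact ⟨n0a, neKQx 0 h0K x hxQx, neKQx 0 h0K _ hxbQx,
          neKQy 0 h0K y hyQy, neKQy 0 h0K _ hyabQy⟩
      have m2 : a ∉ ({x, x + b, y, y + a + b} : Finset A) := by
        simp only [mem_insert, mem_singleton]
        push_neg
        exact ⟨neKQx a haK x hxQx, neKQx a haK _ hxbQx,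
          neKQy a haK y hyQy, neKQy a haK _ hyabQy⟩
      have m3 : x ∉ ({x + b, y, y + a + b} : Finset A) := by
        simp only [mem_insert, mem_singleton]
        push_neg
        exact ⟨nxxb, neQxQy x hxQx y hyQy, neQxQy x hxQx _ hyabQy⟩
      have m4 : x + b ∉ ({y, y + a + b} : Finset A) := by
        simp only [mem_insert, mem_singleton]
        push_neg
        exact ⟨neQxQy _ hxbQx y hyQy, neQxQy _ hxbQx _ hyabQy⟩
      have m5 : y ∉ ({y + a + b} : Finset A) := by
        simp only [mem_singleton]; exact nyyab
      have hBcard : ({0, a, x, x + b, y, y + a + b} : Finset A).card = 6 := by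
        rw [card_insert_of_notMem m1, card_insert_of_notMem m2, card_insert_of_notMem m3,
          card_insert_of_notMem m4, card_insert_of_notMem m5, card_singleton]
      have hBsum : ∑ z ∈ ({0, a, x, x + b, y, y + a + b} : Finset A), z = 0 := by
        rw [sum_insert m1, sum_insert m2, sum_insert m3, sum_insert m4, sum_insert m5,
          sum_singleton]
        have e : (0:A) + (a + (x + (x + b + (y + (y + a + b))))) =
            (x + x) + ((y + y) + ((a + a) + (b + b))) := by abel
        rw [e, htorI x hxI, htorI y hyI, ha, hb]; simp
      have hBsubU : ({0, a, x, x + b, y, y + a + b} : Finset A) ⊆ U := by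
        intro z hz
        simp only [mem_insert, mem_singleton] at hz
        rcases hz with rfl|rfl|rfl|rfl|rfl|rfl
        · exact mem_union_left _ (mem_union_left _ h0K)
        · exact mem_union_left _ (mem_union_left _ haK)
        · exact mem_union_left _ (mem_union_right _ hxQx)
        · exact mem_union_left _ (mem_union_right _ hxbQx)
        · exact mem_union_right _ hyQy
        · exact mem_union_right _ hyabQy
      have hdBT : Disjoint ({0, a, x, x + b, y, y + a + b} : Finset A) T := by
        rw [disjoint_left]
        intro z hzB hzT
        exact (mem_sdiff.mp (hTsub hzT)).2 (hBsubU hzB)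
      refine ⟨({0, a, x, x + b, y, y + a + b} : Finset A) ∪ T,
        union_subset (hBsubU.trans hUsub) (hTsub.trans sdiff_subset), ?_, ?_⟩
      · rw [card_union_of_disjoint hdBT, hBcard, hTcard]; omega
      · rw [sum_union hdBT, hBsum, hTsum, add_zero]
    · -- r = 4q + 3
      obtain ⟨T, hTsub, hTcard, hTsum⟩ :=
        kcl_extract a b ha hb ha0 hb0 hab q (I \ K) htorS1 hS1cl (by rw [hS1card]; omega)
      have hBdisj : Disjoint ({a, b, a + b} : Finset A) T := by
        rw [disjoint_left]
        intro z hzB hzT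
        apply (mem_sdiff.mp (hTsub hzT)).2
        simp only [mem_insert, mem_singleton] at hzB
        rcases hzB with rfl | rfl | rfl <;> simp [hKdef]
      have hab' : a ≠ a + b := fun h => hb0 (left_eq_add.mp h)
      have hbb' : b ≠ a + b := fun h => ha0 (left_eq_add.mp (by rwa [add_comm a b] at h))
      have hBcard : ({a, b, a + b} : Finset A).card = 3 := by
        rw [card_insert_of_notMem (by simp [hab, hab']),
          card_insert_of_notMem (by simp [hbb']), card_singleton]
      have hBsum : ∑ z ∈ ({a, b, a + b} : Finset A), z = 0 := by
        rw [sum_insert (by simp [hab, hab']), sum_insert (by simp [hbb']), sum_singleton]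
        have e : a + (b + (a + b)) = (a + a) + (b + b) := by abel
        rw [e, ha, hb, add_zero]
      refine ⟨({a, b, a + b} : Finset A) ∪ T, ?_, ?_, ?_⟩
      · refine union_subset ?_ (hTsub.trans sdiff_subset)
        intro z hz
        simp only [mem_insert, mem_singleton] at hz
        rcases hz with rfl | rfl | rfl
        · exact haI
        · exact hbI
        · exact (hclI a haI).2
      · rw [card_union_of_disjoint hBdisj, hBcard, hTcard]; omega
      · rw [sum_union hBdisj, hBsum, hTsum, add_zero]
end

section
/- Let q ≥ 1 and let G ≅ (Z₃)^q be the elementary abelian 3-group of order 3^q, and let n = 3^q − 1. Then the star K_{1,n−1} admits no G-irregular edge labelling. Equivalently: there is no function f from the n−1 edges of K_{1,n−1} to G such that the n weighted degrees (the n−1 edge labels at the leaves, together with the sum of all edge labels at the center) are pairwise distinct. -/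
open Finset

/-- For `G ≅ (Z₃)^q` of order `3^q` and `n = 3^q − 1`, the star `K_{1,n−1}` admits no
`G`-irregular labelling: no `f` on its `n−1` edges is injective with the center's weight
`∑ f` distinct from every leaf weight `f i`. -/
theorem star_no_irregular_labelling_elementary_three_group
    (q : ℕ) (hq : 1 ≤ q) (n : ℕ) (hn : n = 3 ^ q - 1)
    (f : Fin (n - 1) → (Fin q → ZMod 3)) :
    ¬ (Function.Injective f ∧ ∀ i, (∑ j, f j) ≠ f i) := by
  rintro ⟨hinj, hne⟩
  have h3 : 3 ≤ 3 ^ q := by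
    calc 3 = 3 ^ 1 := by norm_num
    _ ≤ 3 ^ q := Nat.pow_le_pow_right (by norm_num) hq
  have hcardG : Fintype.card (Fin q → ZMod 3) = 3 ^ q := by simp
  -- the image of f
  set S : Finset (Fin q → ZMod 3) := Finset.image f Finset.univ with hS
  have hcardS : S.card = 3 ^ q - 2 := by
    rw [hS, Finset.card_image_of_injective _ hinj, Finset.card_univ]
    simp [hn]
    omega
  have hcardSc : Sᶜ.card = 2 := by
    rw [Finset.card_compl, hcardS, hcardG]
    omega
  obtain ⟨a, b, hab, hSc⟩ := Finset.card_eq_two.mp hcardSc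
  -- sum of all elements of the group is 0
  have hsum0 : (∑ x : Fin q → ZMod 3, x) = 0 := by
    have hneg : (∑ x : Fin q → ZMod 3, x) = ∑ x : Fin q → ZMod 3, -x :=
      (Fintype.sum_equiv (Equiv.neg _) _ _ (fun x => rfl)).symm
    have h2 : (∑ x : Fin q → ZMod 3, x) + (∑ x : Fin q → ZMod 3, x) = 0 := by
      nth_rewrite 1 [hneg]
      rw [← Finset.sum_add_distrib]
      simp
    funext i
    simp only [Pi.zero_apply]
    have := congrFun h2 i
    simp only [Pi.add_apply, Pi.zero_apply] at this
    revert this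
    generalize (∑ x : Fin q → ZMod 3, x) i = y
    revert y; decide
  have hsplit : (∑ x ∈ Sᶜ, x) + (∑ x ∈ S, x) = 0 := by
    rw [Finset.sum_compl_add_sum] at *
    exact hsum0
  have hsumS : (∑ x ∈ S, x) = ∑ j, f j := by
    rw [hS, Finset.sum_image (fun x _ y _ h => hinj h)]
  have hsumSc : (∑ x ∈ Sᶜ, x) = a + b := by
    rw [hSc, Finset.sum_pair hab]
  have hf : (∑ j, f j) = -(a + b) := by
    rw [← hsumS]
    have := hsplit
    rw [hsumSc] at this
    linear_combination this
  -- the center weight is not in the image, so it's in {a,b}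
  have hmem : (∑ j, f j) ∈ Sᶜ := by
    rw [Finset.mem_compl, hS]
    intro hm
    obtain ⟨i, _, hi⟩ := Finset.mem_image.mp hm
    exact hne i hi.symm
  rw [hSc, Finset.mem_insert, Finset.mem_singleton, hf] at hmem
  -- in each case derive a = b pointwise, contradiction
  apply hab
  funext i
  rcases hmem with h | h
  · have := congrFun h i
    simp only [Pi.neg_apply, Pi.add_apply] at this
    revert this
    generalize a i = x; generalize b i = y
    revert x y; decide
  · have := congrFun h i
    simp only [Pi.neg_apply, Pi.add_apply] at this
    revert this
    generalize a i = x; generalize b i = y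
    revert x y; decide
end

section
/- Let G be a finite abelian group of order n = 2k+1 (odd, k ≥ 1) and let T be a tree on n vertices. Then T admits a G-irregular edge labelling, i.e., there exists f : E(T) → G such that the vertex sums w(v) = Σ_{e ∋ v} f(e) are pairwise distinct (in fact, they realize all elements of G). -/
/-!
Edge labellings act additively on weighted degrees. Labelling the edges of a walk from `v` to `r`
alternately `a, -a, a, …` contributes `a` at `v` and `±a` at `r`, and cancels at every interior
visit; hence every `t : V → A` whose sums over the two parity classes (by the length of a chosen
walk to `r`) agree is a weighted-degree vector. If `|A|` is odd then `a ≠ -a` for `a ≠ 0`, so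
pairs `{a, -a}`, together with `0`, give zero-sum subsets of `A` of every size, and a bijection
`V ≃ A` mapping both parity classes onto zero-sum sets is realized by an injective labelling.
-/

open Finset

section OddOrder

variable {A : Type*} [AddCommGroup A] [Fintype A]

theorem neg_ne_self_of_odd_card (hA : Odd (Fintype.card A)) {a : A} (ha : a ≠ 0) : -a ≠ a := by
  intro h
  have hcop : (Nat.card A).Coprime 2 := by rwa [Nat.card_eq_fintype_card, Nat.coprime_two_right]
  refine ha (hcop.nsmul_right_bijective.injective ?_)
  simp only [two_nsmul, smul_zero]
  nth_rw 1 [← h]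
  exact neg_add_cancel a

theorem exists_finset_card_eq_two_mul_sum_eq_zero (hA : Odd (Fintype.card A)) {j : ℕ}
    (hj : 2 * j < Fintype.card A) :
    ∃ U : Finset A, U.card = 2 * j ∧ (0 : A) ∉ U ∧ ∑ a ∈ U, a = 0 := by
  classical
  let e := Fintype.equivFin A
  -- for `a ≠ 0`, exactly one of `a`, `-a` lies in `H`
  let H := univ.filter fun a : A => e a < e (-a)
  have hcover : (univ : Finset A) ⊆ insert 0 (H ∪ H.image Neg.neg) := by
    intro a _
    by_cases ha : a = 0
    · simp [ha]
    rcases lt_or_gt_of_ne (e.injective.ne (neg_ne_self_of_odd_card hA ha)) with h | h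
    · exact mem_insert_of_mem (mem_union_right _ (mem_image.2 ⟨-a, by simp [H, h], neg_neg a⟩))
    · exact mem_insert_of_mem (mem_union_left _ (by simp [H, h]))
  have hH : 2 * j ≤ 2 * H.card := by
    have := (card_le_card hcover).trans (card_insert_le _ _)
    have := card_union_le H (H.image Neg.neg)
    have := card_image_le (s := H) (f := Neg.neg)
    rw [card_univ] at *
    omega
  obtain ⟨P, hPH, hP⟩ := exists_subset_card_eq (show j ≤ H.card by omega)
  have hdisj : Disjoint P (P.image Neg.neg) := by
    refine disjoint_left.2 fun a haP hanP => ?_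
    obtain ⟨b, hbP, rfl⟩ := mem_image.1 hanP
    have h1 := (mem_filter.1 (hPH haP)).2
    have h2 := (mem_filter.1 (hPH hbP)).2
    rw [neg_neg] at h1
    exact lt_asymm h1 h2
  refine ⟨P ∪ P.image Neg.neg, ?_, ?_, ?_⟩
  · rw [card_union_of_disjoint hdisj, card_image_of_injective _ neg_injective, hP, two_mul]
  · intro h0
    rcases mem_union.1 h0 with h | h
    · simpa [H] using hPH h
    · obtain ⟨b, hb, hb0⟩ := mem_image.1 h
      rw [neg_eq_zero] at hb0
      subst hb0
      simpa [H] using hPH hb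
  · rw [sum_union hdisj, sum_image neg_injective.injOn, sum_neg_distrib, add_neg_cancel]

theorem exists_finset_card_eq_sum_eq_zero (hA : Odd (Fintype.card A)) {m : ℕ}
    (hm : m ≤ Fintype.card A) : ∃ S : Finset A, S.card = m ∧ ∑ a ∈ S, a = 0 := by
  classical
  obtain ⟨j, rfl | rfl⟩ := Nat.even_or_odd' m
  · obtain ⟨U, hU, -, hsum⟩ :=
      exists_finset_card_eq_two_mul_sum_eq_zero (j := j) hA (by obtain ⟨k, hk⟩ := hA; omega)
    exact ⟨U, hU, hsum⟩
  · obtain ⟨U, hU, h0, hsum⟩ := exists_finset_card_eq_two_mul_sum_eq_zero hA hm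
    refine ⟨insert 0 U, ?_, ?_⟩
    · rw [card_insert_of_notMem h0, hU]
    · rw [sum_insert h0, hsum, add_zero]

theorem sum_univ_eq_zero_of_odd_card (hA : Odd (Fintype.card A)) : ∑ a : A, a = 0 := by
  obtain ⟨S, hS, hsum⟩ := exists_finset_card_eq_sum_eq_zero hA le_rfl
  rwa [eq_univ_of_card S hS] at hsum

end OddOrder

theorem Finset.exists_equiv_mem_iff {V A : Type*} [Fintype V] [Fintype A]
    (hVA : Fintype.card V = Fintype.card A) {X : Finset V} {S : Finset A} (hXS : X.card = S.card) :
    ∃ t : V ≃ A, ∀ v, t v ∈ S ↔ v ∈ X := by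
  classical
  let e₁ : {v // v ∈ X} ≃ {a // a ∈ S} := X.equivOfCardEq hXS
  let e₂ : {v // v ∉ X} ≃ {a // a ∉ S} := Fintype.equivOfCardEq <| by
    rw [Fintype.card_subtype_compl, Fintype.card_subtype_compl, Fintype.card_coe,
      Fintype.card_coe, hVA, hXS]
  refine ⟨(Equiv.sumCompl (· ∈ X)).symm.trans
    ((e₁.sumCongr e₂).trans (Equiv.sumCompl (· ∈ S))), fun v => ?_⟩
  by_cases hv : v ∈ X
  · simp [Equiv.sumCompl_symm_apply_of_pos hv, hv]
  · simpa [Equiv.sumCompl_symm_apply_of_neg hv, hv] using (e₂ ⟨v, hv⟩).2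

theorem exists_equiv_sum_filter_eq_zero {V A : Type*} [Fintype V] [AddCommGroup A] [Fintype A]
    (hA : Odd (Fintype.card A)) (hVA : Fintype.card V = Fintype.card A) (P : V → Prop)
    [DecidablePred P] : ∃ t : V ≃ A, ∑ v with P v, t v = 0 ∧ ∑ v with ¬P v, t v = 0 := by
  classical
  obtain ⟨S, hS, hsum⟩ := exists_finset_card_eq_sum_eq_zero hA
    ((card_le_univ (univ.filter P)).trans hVA.le)
  obtain ⟨t, ht⟩ := exists_equiv_mem_iff hVA hS.symm
  refine ⟨t, ?_, ?_⟩
  · exact (sum_equiv t (fun v => (ht v).symm) (g := fun a => a) fun _ _ => rfl).trans hsum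
  · refine (sum_equiv t (t := Sᶜ) (fun v => by simp [ht]) (g := fun a => a)
      fun _ _ => rfl).trans ?_
    rw [← add_right_cancel_iff (a := ∑ a ∈ S, a), sum_compl_add_sum, hsum, add_zero,
      sum_univ_eq_zero_of_odd_card hA]

namespace SimpleGraph

variable {V A : Type*} [Fintype V] [AddCommGroup A] (G : SimpleGraph V) [DecidableRel G.Adj]

def weightedDegree : (Sym2 V → A) →+ (V → A) :=
  AddMonoidHom.mk' (fun f v => ∑ u ∈ G.neighborFinset v, f s(v, u)) fun f g => by
    ext v; simp [sum_add_distrib]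

@[simp]
theorem weightedDegree_apply (f : Sym2 V → A) (v : V) :
    G.weightedDegree f v = ∑ u ∈ G.neighborFinset v, f s(v, u) :=
  rfl

theorem weightedDegree_single [DecidableEq V] {x y : V} (h : G.Adj x y) (a : A) :
    G.weightedDegree (Pi.single s(x, y) a) = Pi.single x a + Pi.single y a := by
  ext v
  simp only [weightedDegree_apply, Pi.single_apply, Pi.add_apply, Sym2.eq_iff]
  by_cases hx : v = x
  · subst hx
    simp [h, h.ne]
  by_cases hy : v = y
  · subst hy
    simp [hx, h.symm]
  · simp [hx, hy]

variable {G}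

theorem Walk.single_sub_single_mem_range_weightedDegree [DecidableEq V] {x y : V}
    (p : G.Walk x y) (a : A) :
    (Pi.single x a - Pi.single y ((-1 : ℤ) ^ p.length • a) : V → A) ∈
      G.weightedDegree.range := by
  induction p with
  | nil => simp
  | @cons x z y h p ih =>
    convert sub_mem (AddMonoidHom.mem_range.2 ⟨_, G.weightedDegree_single h a⟩) ih using 1
    rw [length_cons, pow_succ, mul_neg_one, neg_smul, Pi.single_neg]
    generalize (-1 : ℤ) ^ p.length • a = b
    abel

theorem mem_range_weightedDegree {r : V} (p : ∀ v, G.Walk v r) {t : V → A}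
    (ht : ∑ v with Even (p v).length, t v = ∑ v with ¬Even (p v).length, t v) :
    t ∈ G.weightedDegree.range := by
  classical
  have hsigned : ∑ v, (-1 : ℤ) ^ (p v).length • t v = 0 := by
    have heven : ∀ v ∈ univ.filter fun v => Even (p v).length,
        (-1 : ℤ) ^ (p v).length • t v = t v := fun v hv => by
      rw [(mem_filter.1 hv).2.neg_one_pow, one_smul]
    have hodd : ∀ v ∈ univ.filter fun v => ¬Even (p v).length,
        (-1 : ℤ) ^ (p v).length • t v = -t v := fun v hv => by
      rw [(Nat.not_even_iff_odd.1 (mem_filter.1 hv).2).neg_one_pow, neg_one_smul]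
    rw [← sum_filter_add_sum_filter_not univ fun v => Even (p v).length, sum_congr rfl heven,
      sum_congr rfl hodd, sum_neg_distrib, ht, add_neg_cancel]
  have hdecomp :
      t = ∑ v, (Pi.single v (t v) - Pi.single r ((-1 : ℤ) ^ (p v).length • t v)) := by
    have hsingle : ∑ v, Pi.single r ((-1 : ℤ) ^ (p v).length • t v) = (0 : V → A) :=
      (map_sum (AddMonoidHom.single (fun _ => A) r) _ _).symm.trans <| by
        rw [AddMonoidHom.single_apply, hsigned, Pi.single_zero]
    rw [sum_sub_distrib, univ_sum_single, hsingle, sub_zero]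
  rw [hdecomp]
  exact sum_mem fun v _ => (p v).single_sub_single_mem_range_weightedDegree (t v)

theorem Connected.exists_injective_weightedDegree [Fintype A] (hG : G.Connected)
    (hA : Odd (Fintype.card A)) (hVA : Fintype.card V = Fintype.card A) :
    ∃ f : Sym2 V → A, Function.Injective (G.weightedDegree f) := by
  obtain ⟨r⟩ := hG.nonempty
  let p v : G.Walk v r := (hG.preconnected v r).some
  obtain ⟨t, hteven, htodd⟩ := exists_equiv_sum_filter_eq_zero hA hVA fun v => Even (p v).length
  obtain ⟨f, hf⟩ := mem_range_weightedDegree p (hteven.trans htodd.symm)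
  exact ⟨f, hf ▸ t.injective⟩

end SimpleGraph

theorem tree_irregular_labelling_odd_order_general
    {V A : Type} [Fintype V] [AddCommGroup A] [Fintype A]
    (T : SimpleGraph V) [DecidableRel T.Adj] (hT : T.IsTree)
    (k : ℕ) (hV : Fintype.card V = 2 * k + 1)
    (hA : Fintype.card A = 2 * k + 1) :
    ∃ f : Sym2 V → A,
      Function.Injective (fun v : V => ∑ u ∈ T.neighborFinset v, f s(v, u)) :=
  hT.connected.exists_injective_weightedDegree (hA ▸ odd_two_mul_add_one k) (hV.trans hA.symm)

/-- Every tree on `n = 2k+1` vertices (`k ≥ 1`) admits a `G`-irregular labelling for every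
finite abelian group `G` of order `n`. -/
theorem tree_irregular_labelling_odd_order
    {V A : Type} [Fintype V] [DecidableEq V] [AddCommGroup A] [Fintype A]
    (T : SimpleGraph V) [DecidableRel T.Adj] (hT : T.IsTree)
    (k : ℕ) (hk : 1 ≤ k) (hV : Fintype.card V = 2 * k + 1)
    (hA : Fintype.card A = 2 * k + 1) :
    ∃ f : Sym2 V → A,
      Function.Injective (fun v : V => ∑ u ∈ T.neighborFinset v, f s(v, u)) :=
  tree_irregular_labelling_odd_order_general T hT k hV hA
end

section
/- Let T = (V, E) be a tree and A ⊆ V nonempty with |A| even. Then there exists a partition of A into pairs {a₁,a₂},…,{a_{2r−1},a_{2r}} such that Σᵢ dist_T(a_{2i−1}, a_{2i}) = Σ_{v∈V} k(v), where, for a fixed root, k(v) counts the children c of v whose subtree contains an odd number of elements of A. In particular, there is a pairing achieving pairwise edge-disjoint connecting paths. -/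
open Finset

/-- For a tree `T` rooted at `r` and a set `A` of vertices, `oddChildCount T r A v` is
`k(v)`: the number of children `c` of `v` whose subtree contains an odd number of
elements of `A`. -/
noncomputable def oddChildCount {V : Type} [Fintype V] [DecidableEq V]
    (T : SimpleGraph V) [DecidableRel T.Adj] (r : V) (A : Finset V) (v : V) : ℕ :=
  (Finset.univ.filter (fun c : V =>
    T.Adj v c ∧ T.dist r c = T.dist r v + 1 ∧
      Odd ((A.filter (fun u => T.dist r u = T.dist r c + T.dist c u)).card))).card

set_option linter.unusedSectionVars false
set_option linter.unusedVariables false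
set_option linter.unnecessarySeqFocus false

namespace TP
open SimpleGraph

variable {V : Type} [Fintype V] [DecidableEq V] {T : SimpleGraph V} [DecidableRel T.Adj]

/-- `Sub T r c u` : `c` lies on the geodesic from `r` to `u` (i.e. `u` is in the subtree of `c`). -/
abbrev Sub (T : SimpleGraph V) (r c u : V) : Prop :=
  T.dist r u = T.dist r c + T.dist c u

lemma sub_self (T : SimpleGraph V) (r c : V) : Sub T r c c := by simp [Sub]

lemma sub_root (T : SimpleGraph V) (r u : V) : Sub T r r u := by simp [Sub]

variable (hT : T.IsTree) (r : V)
include hT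

lemma dist_tri (u v w : V) : T.dist u w ≤ T.dist u v + T.dist v w :=
  hT.isConnected.dist_triangle

/-- canonical geodesic path -/
noncomputable def gp (u v : V) : T.Walk u v :=
  (hT.isConnected.exists_path_of_dist u v).choose

lemma gp_isPath (u v : V) : (gp hT u v).IsPath :=
  (hT.isConnected.exists_path_of_dist u v).choose_spec.1

lemma gp_length (u v : V) : (gp hT u v).length = T.dist u v :=
  (hT.isConnected.exists_path_of_dist u v).choose_spec.2

lemma path_unique {u v : V} (p q : T.Walk u v) (hp : p.IsPath) (hq : q.IsPath) : p = q := by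
  obtain ⟨w, -, hu⟩ := hT.existsUnique_path u v
  rw [hu p hp, hu q hq]

lemma path_length {u v : V} (p : T.Walk u v) (hp : p.IsPath) : p.length = T.dist u v := by
  rw [path_unique hT p (gp hT u v) hp (gp_isPath hT u v)]; exact gp_length hT u v

lemma sub_trans {c d u : V} (h1 : Sub T r c d) (h2 : Sub T r d u) : Sub T r c u := by
  have h3 := dist_tri hT c d u
  have h4 := dist_tri hT r c u
  simp only [Sub] at *
  omega

lemma cons_geodesic {u x v : V} (h : T.Adj u x) (p : T.Walk x v)
    (hl : (Walk.cons h p).length = T.dist u v) : p.length = T.dist x v := by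
  have h1 : T.dist x v ≤ p.length := dist_le p
  have h2 : T.dist u v ≤ 1 + T.dist x v := by
    have := dist_tri hT u x v
    have : T.dist u x ≤ 1 := by
      have := dist_le (Walk.cons h (Walk.nil)); simpa using this
    omega
  simp only [Walk.length_cons] at hl
  omega

/-- distances along a geodesic walk -/
lemma geov {u v : V} (w : T.Walk u v) (hl : w.length = T.dist u v) (i : ℕ) (hi : i ≤ w.length) :
    T.dist u (w.getVert i) = i ∧ T.dist (w.getVert i) v = w.length - i := by
  induction w generalizing i with
  | nil => simp only [Walk.length_nil, Nat.le_zero] at hi; subst hi; simp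
  | cons h p ih =>
    rename_i a x b
    have hp : p.length = T.dist x b := cons_geodesic hT h p hl
    cases i with
    | zero => simp only [Walk.getVert_zero]; constructor; · simp
              simpa using hl.symm
    | succ j =>
      simp only [Walk.length_cons] at hi
      have hj : j ≤ p.length := by omega
      obtain ⟨h1, h2⟩ := ih hp j hj
      rw [Walk.getVert_cons_succ]
      constructor
      · have hle : T.dist a (p.getVert j) ≤ j + 1 := by
          have := dist_tri hT a x (p.getVert j)
          have : T.dist a x ≤ 1 := by have := dist_le (Walk.cons h (Walk.nil)); simpa using this
          omega
        have hge : T.dist a b ≤ T.dist a (p.getVert j) + T.dist (p.getVert j) b :=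
          dist_tri hT _ _ _
        simp only [Walk.length_cons] at hl
        omega
      · simp only [Walk.length_cons]; omega

lemma geov2 {u v : V} (w : T.Walk u v) (hl : w.length = T.dist u v) (i j : ℕ)
    (hij : i ≤ j) (hj : j ≤ w.length) :
    T.dist (w.getVert i) (w.getVert j) = j - i := by
  induction w generalizing i j with
  | nil =>
    simp only [Walk.length_nil, Nat.le_zero] at hj
    have : i = 0 := by omega
    subst hj; subst this; simp
  | cons h p ih =>
    rename_i a x b
    have hp : p.length = T.dist x b := cons_geodesic hT h p hl
    cases i with
    | zero =>
      simp only [Walk.getVert_zero]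
      have := (geov hT _ hl j hj).1
      simpa using this
    | succ i' =>
      cases j with
      | zero => omega
      | succ j' =>
        simp only [Walk.getVert_cons_succ]
        simp only [Walk.length_cons] at hj
        have := ih hp i' j' (by omega) (by omega)
        simpa using this


lemma mem_support_iff_sub {u : V} (w : T.Walk r u) (hw : w.IsPath) (c : V) :
    c ∈ w.support ↔ Sub T r c u := by
  constructor
  · intro hm
    have hsp := w.take_spec hm
    have hlen := congrArg Walk.length hsp
    rw [Walk.length_append] at hlen
    have h1 : T.dist r c ≤ (w.takeUntil c hm).length := dist_le _
    have h2 : T.dist c u ≤ (w.dropUntil c hm).length := dist_le _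
    have h3 : T.dist r u ≤ T.dist r c + T.dist c u := dist_tri hT r c u
    have h4 : w.length = T.dist r u := path_length hT w hw
    simp only [Sub]; omega
  · intro hs
    have hlen : ((gp hT r c).append (gp hT c u)).length = T.dist r u := by
      rw [Walk.length_append, gp_length, gp_length, hs]
    have hp : ((gp hT r c).append (gp hT c u)).IsPath :=
      Walk.isPath_of_length_eq_dist _ hlen
    rw [path_unique hT w _ hw hp, Walk.mem_support_append_iff]
    exact Or.inr (Walk.start_mem_support _)

lemma getvert_eq {u : V} (w : T.Walk r u) (hw : w.IsPath) (c : V) (hc : Sub T r c u) :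
    w.getVert (T.dist r c) = c := by
  have hm : c ∈ w.support := (mem_support_iff_sub hT r w hw c).2 hc
  have hsp := w.take_spec hm
  have hlen := congrArg Walk.length hsp
  rw [Walk.length_append] at hlen
  have h1 : T.dist r c ≤ (w.takeUntil c hm).length := dist_le _
  have h2 : T.dist c u ≤ (w.dropUntil c hm).length := dist_le _
  have h4 : w.length = T.dist r u := path_length hT w hw
  have h5 : (w.takeUntil c hm).length = T.dist r c := by simp only [Sub] at hc; omega
  conv_lhs => rw [← hsp]
  rw [Walk.getVert_append]
  simp [h5]

lemma sub_eq_of_dist_eq {u c c' : V} (h1 : Sub T r c u) (h2 : Sub T r c' u)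
    (hd : T.dist r c = T.dist r c') : c = c' := by
  have e1 := getvert_eq hT r (gp hT r u) (gp_isPath hT r u) c h1
  have e2 := getvert_eq hT r (gp hT r u) (gp_isPath hT r u) c' h2
  rw [← e1, ← e2, hd]

lemma dist_eq_zero {x y : V} (h : T.dist x y = 0) : x = y :=
  (hT.isConnected.dist_eq_zero_iff).1 h

lemma adj_dist_cases {x y : V} (h : T.Adj x y) :
    T.dist r y = T.dist r x + 1 ∨ T.dist r x = T.dist r y + 1 := by
  have hxy : T.dist x y ≤ 1 := by
    have := dist_le (Walk.cons h Walk.nil); simpa using this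
  have hyx : T.dist y x ≤ 1 := by
    have := dist_le (Walk.cons h.symm Walk.nil); simpa using this
  have h1 : T.dist r y ≤ T.dist r x + 1 := by have := dist_tri hT r x y; omega
  have h2 : T.dist r x ≤ T.dist r y + 1 := by have := dist_tri hT r y x; omega
  have hne : T.dist r x ≠ T.dist r y := by
    intro hd
    have hns : y ∉ (gp hT r x).support := by
      intro hm
      have : Sub T r y x := (mem_support_iff_sub hT r _ (gp_isPath hT r x) y).1 hm
      simp only [Sub] at this
      have : T.dist y x = 0 := by omega
      exact h.ne' (dist_eq_zero hT this)
    have hns' : y ∉ (gp hT r x).reverse.support := by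
      rwa [Walk.support_reverse, List.mem_reverse]
    have hp : (Walk.cons h.symm (gp hT r x).reverse).IsPath :=
      ((gp_isPath hT r x).reverse).cons hns'
    have := path_length hT _ hp
    rw [Walk.length_cons, Walk.length_reverse, gp_length] at this
    have hcomm : T.dist y r = T.dist r y := dist_comm
    omega
  omega

lemma exists_parent {c : V} (hc : c ≠ r) :
    ∃ v, T.Adj v c ∧ T.dist r c = T.dist r v + 1 := by
  have hd : T.dist r c ≠ 0 := fun h => hc (dist_eq_zero hT h).symm
  set w := gp hT r c with hw
  have hl : w.length = T.dist r c := gp_length hT r c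
  have hi : T.dist r c - 1 < w.length := by omega
  have hadj := w.adj_getVert_succ hi
  have hend : w.getVert (T.dist r c - 1 + 1) = c := by
    have : T.dist r c - 1 + 1 = w.length := by omega
    rw [this, Walk.getVert_length]
  have hdist := (geov hT _ hl (T.dist r c - 1) (by omega)).1
  refine ⟨w.getVert (T.dist r c - 1), ?_, ?_⟩
  · rwa [hend] at hadj
  · omega

lemma parent_unique {c v1 v2 : V} (h1 : T.Adj v1 c) (hd1 : T.dist r c = T.dist r v1 + 1)
    (h2 : T.Adj v2 c) (hd2 : T.dist r c = T.dist r v2 + 1) : v1 = v2 := by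
  have key : ∀ v : V, T.Adj v c → T.dist r c = T.dist r v + 1 → Sub T r v c := by
    intro v hv hdv
    have hvc : T.dist v c ≤ 1 := by
      have := dist_le (Walk.cons hv Walk.nil); simpa using this
    have hvc' : T.dist v c ≠ 0 := fun h => hv.ne (dist_eq_zero hT h)
    simp only [Sub]; omega
  exact sub_eq_of_dist_eq hT r (key v1 h1 hd1) (key v2 h2 hd2) (by omega)

/-- the parent of a vertex (w.r.t. root `r`); junk value for `r` itself -/
noncomputable def par (T : SimpleGraph V) [DecidableRel T.Adj] (r c : V) : V :=
  if h : ∃ v, T.Adj v c ∧ T.dist r c = T.dist r v + 1 then h.choose else r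

omit hT in
lemma par_def {c : V} (h : ∃ v, T.Adj v c ∧ T.dist r c = T.dist r v + 1) :
    T.Adj (par T r c) c ∧ T.dist r c = T.dist r (par T r c) + 1 := by
  rw [par, dif_pos h]; exact h.choose_spec

lemma par_spec {c : V} (hc : c ≠ r) :
    T.Adj (par T r c) c ∧ T.dist r c = T.dist r (par T r c) + 1 :=
  par_def r (exists_parent hT r hc)

lemma par_eq {c v : V} (h : T.Adj v c) (hd : T.dist r c = T.dist r v + 1) :
    par T r c = v := by
  have hc : c ≠ r := by
    intro hcr; subst hcr
    rw [(hT.isConnected.dist_eq_zero_iff).2 rfl] at hd; omega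
  obtain ⟨h1, h2⟩ := par_spec hT r hc
  exact parent_unique hT r h1 h2 h hd

lemma sub_adj_up {x y : V} (h : T.Adj x y) (hd : T.dist r y = T.dist r x + 1)
    {c : V} (hc : Sub T r c x) : Sub T r c y := by
  have h1 : T.dist c y ≤ T.dist c x + 1 := by
    have := dist_tri hT c x y
    have hxy : T.dist x y ≤ 1 := by have := dist_le (Walk.cons h Walk.nil); simpa using this
    omega
  have h2 : T.dist r y ≤ T.dist r c + T.dist c y := dist_tri hT r c y
  simp only [Sub] at *; omega

lemma not_sub_far {x y : V} (hd : T.dist r y = T.dist r x + 1) : ¬ Sub T r y x := by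
  simp only [Sub]; omega

lemma sub_adj_down {x y : V} (h : T.Adj x y) (hd : T.dist r y = T.dist r x + 1)
    {c : V} (hc : Sub T r c y) (hcy : c ≠ y) : Sub T r c x := by
  have hns : y ∉ (gp hT r x).support := by
    intro hm
    exact not_sub_far hT r hd ((mem_support_iff_sub hT r _ (gp_isPath hT r x) y).1 hm)
  have hns' : y ∉ (gp hT r x).reverse.support := by
    rwa [Walk.support_reverse, List.mem_reverse]
  have hp : ((Walk.cons h.symm (gp hT r x).reverse).reverse).IsPath :=
    (((gp_isPath hT r x).reverse).cons hns').reverse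
  have hm : c ∈ ((Walk.cons h.symm (gp hT r x).reverse).reverse).support := by
    rw [path_unique hT _ (gp hT r y) hp (gp_isPath hT r y)]
    exact (mem_support_iff_sub hT r _ (gp_isPath hT r y) c).2 hc
  rw [Walk.support_reverse, List.mem_reverse, Walk.support_cons, List.mem_cons,
    Walk.support_reverse, List.mem_reverse] at hm
  rcases hm with rfl | hm
  · exact absurd rfl hcy
  · exact (mem_support_iff_sub hT r _ (gp_isPath hT r x) c).1 hm


/-- the set of (far endpoints of) edges separating `a` from `b` -/
noncomputable def Dset (T : SimpleGraph V) [DecidableRel T.Adj] (r a b : V) : Finset V :=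
  univ.filter (fun c => c ≠ r ∧ ¬(Sub T r c a ↔ Sub T r c b))

omit hT in
lemma mem_Dset {a b c : V} :
    c ∈ Dset T r a b ↔ c ≠ r ∧ ¬(Sub T r c a ↔ Sub T r c b) := by
  simp [Dset]

/-- single-edge case : the only separating vertex of an edge is its far endpoint -/
lemma sub_edge_iff {x y : V} (h : T.Adj x y) (hd : T.dist r y = T.dist r x + 1) (c : V) :
    (¬(Sub T r c x ↔ Sub T r c y)) ↔ c = y := by
  constructor
  · intro hne
    by_contra hcy
    exact hne ⟨fun hs => sub_adj_up hT r h hd hs, fun hs => sub_adj_down hT r h hd hs hcy⟩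
  · rintro rfl
    intro hiff
    exact not_sub_far hT r hd (hiff.2 (sub_self T r _))

lemma par_ne_cases {x y : V} (h : T.Adj x y) :
    (T.dist r y = T.dist r x + 1 ∧ par T r y = x) ∨
    (T.dist r x = T.dist r y + 1 ∧ par T r x = y) := by
  rcases adj_dist_cases hT r h with hd | hd
  · exact Or.inl ⟨hd, par_eq hT r h hd⟩
  · exact Or.inr ⟨hd, par_eq hT r h.symm hd⟩

/-- every edge of the graph is `s(c, par c)` for its far endpoint `c` -/
lemma edge_repr {e : Sym2 V} (he : e ∈ T.edgeSet) :
    ∃ c, c ≠ r ∧ T.dist r c = T.dist r (par T r c) + 1 ∧ T.Adj (par T r c) c ∧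
      e = s(c, par T r c) := by
  induction e using Sym2.ind with
  | _ x y =>
    rw [mem_edgeSet] at he
    rcases par_ne_cases hT r he with ⟨hd, hp⟩ | ⟨hd, hp⟩
    · refine ⟨y, ?_, by rw [hp]; exact hd, by rw [hp]; exact he, by rw [hp, Sym2.eq_swap]⟩
      intro hrfl; subst hrfl
      rw [(hT.isConnected.dist_eq_zero_iff).2 rfl] at hd; omega
    · refine ⟨x, ?_, by rw [hp]; exact hd, by rw [hp]; exact he.symm, by rw [hp]⟩
      intro hrfl; subst hrfl
      rw [(hT.isConnected.dist_eq_zero_iff).2 rfl] at hd; omega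

omit hT in
lemma logic_helper {P1 P2 P3 C : Prop} (h3 : ¬(P1 ↔ P2) ↔ C) (hx : ¬(C ∧ ¬(P2 ↔ P3))) :
    (C ∨ ¬(P2 ↔ P3)) ↔ ¬(P1 ↔ P3) := by tauto

/-- main edge-membership lemma: an edge `s(c, par c)` lies on the geodesic between `a` and
`b` iff `c` separates `a` from `b`. -/
lemma edges_iff {a b : V} (w : T.Walk a b) (hp : w.IsPath) (hl : w.length = T.dist a b)
    {c : V} (hc : c ≠ r) (hpar : T.dist r c = T.dist r (par T r c) + 1) :
    s(c, par T r c) ∈ w.edges ↔ ¬(Sub T r c a ↔ Sub T r c b) := by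
  induction w with
  | nil => simp
  | cons h p ih =>
    rename_i u x b'
    have hpl : p.length = T.dist x b' := cons_geodesic hT h p hl
    have hpp : p.IsPath := hp.of_cons
    have hus : u ∉ p.support := ((Walk.cons_isPath_iff h p).1 hp).2
    rcases par_ne_cases hT r h with ⟨hd, hpx⟩ | ⟨hd, hpx⟩
    · -- x is the far endpoint of edge (u,x)
      have claim1 : s(c, par T r c) = s(u, x) ↔ c = x := by
        constructor
        · intro heq
          rw [Sym2.eq_iff] at heq
          rcases heq with ⟨h1, h2⟩ | ⟨h1, h2⟩
          · -- c = u, par c = x : impossible since dist r x = dist r c + 1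
            exfalso; rw [h2] at hpar; rw [h1] at hpar; omega
          · exact h1
        · rintro rfl
          rw [hpx, Sym2.eq_swap]
      have claim3 : (¬(Sub T r c u ↔ Sub T r c x)) ↔ c = x := sub_edge_iff hT r h hd c
      have excl : ¬(c = x ∧ s(c, par T r c) ∈ p.edges) := by
        rintro ⟨rfl, hmem⟩
        rw [claim1.2 rfl] at hmem
        exact hus (Walk.fst_mem_support_of_mem_edges p hmem)
      rw [Walk.edges_cons, List.mem_cons, claim1, ih hpp hpl]
      rw [ih hpp hpl] at excl
      exact logic_helper claim3 excl
    · -- u is the far endpoint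
      have claim1 : s(c, par T r c) = s(u, x) ↔ c = u := by
        constructor
        · intro heq
          rw [Sym2.eq_iff] at heq
          rcases heq with ⟨h1, h2⟩ | ⟨h1, h2⟩
          · exact h1
          · exfalso; rw [h2] at hpar; rw [h1] at hpar; omega
        · rintro rfl
          rw [hpx]
      have claim3 : (¬(Sub T r c u ↔ Sub T r c x)) ↔ c = u := by
        rw [← sub_edge_iff hT r h.symm hd c]; tauto
      have excl : ¬(c = u ∧ s(c, par T r c) ∈ p.edges) := by
        rintro ⟨rfl, hmem⟩
        rw [claim1.2 rfl] at hmem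
        exact hus (Walk.fst_mem_support_of_mem_edges p hmem)
      rw [Walk.edges_cons, List.mem_cons, claim1, ih hpp hpl]
      rw [ih hpp hpl] at excl
      exact logic_helper claim3 excl

lemma card_Dset (a b : V) : (Dset T r a b).card = T.dist a b := by
  classical
  set w := gp hT a b with hw
  have hwp : w.IsPath := gp_isPath hT a b
  have hwl : w.length = T.dist a b := gp_length hT a b
  have hcard : (Dset T r a b).card = w.edges.toFinset.card := by
    apply Finset.card_bij (fun c _ => s(c, par T r c))
    · intro c hcD
      rw [mem_Dset] at hcD
      have hpar := (par_spec hT r hcD.1).2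
      rw [List.mem_toFinset]
      exact (edges_iff hT r w hwp hwl hcD.1 hpar).2 hcD.2
    · intro c1 hc1 c2 hc2 heq
      rw [mem_Dset] at hc1 hc2
      have hp1 := (par_spec hT r hc1.1).2
      have hp2 := (par_spec hT r hc2.1).2
      rw [Sym2.eq_iff] at heq
      rcases heq with ⟨rfl, _⟩ | ⟨h1, h2⟩
      · rfl
      · rw [← h1, ← h2] at hp2; omega
    · intro e he
      rw [List.mem_toFinset] at he
      have heS : e ∈ T.edgeSet := w.edges_subset_edgeSet he
      obtain ⟨c, hcr, hpar, hadj, rfl⟩ := edge_repr hT r heS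
      refine ⟨c, ?_, rfl⟩
      rw [mem_Dset]
      exact ⟨hcr, (edges_iff hT r w hwp hwl hcr hpar).1 he⟩
  rw [hcard, List.toFinset_card_of_nodup hwp.edges_nodup, Walk.length_edges, hwl]


noncomputable def oddSet (T : SimpleGraph V) [DecidableRel T.Adj] (r : V) (A : Finset V) :
    Finset V :=
  univ.filter (fun c => c ≠ r ∧ Odd ((A.filter (fun u => Sub T r c u)).card))

omit hT in
lemma mem_oddSet {A : Finset V} {c : V} :
    c ∈ oddSet T r A ↔ c ≠ r ∧ Odd ((A.filter (fun u => Sub T r c u)).card) := by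
  simp [oddSet]

omit hT in
lemma oddSet_empty : oddSet T r (∅ : Finset V) = ∅ := by
  ext c; simp [oddSet]

/-- children of a vertex -/
noncomputable def children (T : SimpleGraph V) [DecidableRel T.Adj] (r v : V) : Finset V :=
  univ.filter (fun c => T.Adj v c ∧ T.dist r c = T.dist r v + 1)

omit hT in
lemma mem_children {v c : V} :
    c ∈ children T r v ↔ T.Adj v c ∧ T.dist r c = T.dist r v + 1 := by simp [children]

lemma sum_oddChildCount (A : Finset V) :
    ∑ v : V, oddChildCount T r A v = (oddSet T r A).card := by
  classical
  have hS : ∀ v : V, oddChildCount T r A v =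
      ((children T r v).filter
        (fun c => Odd ((A.filter (fun u => Sub T r c u)).card))).card := by
    intro v
    rw [oddChildCount]
    congr 1
    ext c
    simp [children, Sub, and_assoc]
  have hdisj : ∀ v1 ∈ (univ : Finset V), ∀ v2 ∈ univ, v1 ≠ v2 →
      Disjoint ((children T r v1).filter
          (fun c => Odd ((A.filter (fun u => Sub T r c u)).card)))
        ((children T r v2).filter
          (fun c => Odd ((A.filter (fun u => Sub T r c u)).card))) := by
    intro v1 _ v2 _ hne
    rw [Finset.disjoint_left]
    intro c h1 h2
    rw [mem_filter, mem_children] at h1 h2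
    exact hne (parent_unique hT r h1.1.1 h1.1.2 h2.1.1 h2.1.2)
  have hbi : (univ : Finset V).biUnion (fun v => (children T r v).filter
      (fun c => Odd ((A.filter (fun u => Sub T r c u)).card))) = oddSet T r A := by
    ext c
    simp only [mem_biUnion, mem_filter, mem_children, mem_oddSet, mem_univ, true_and]
    constructor
    · rintro ⟨v, ⟨hadj, hdist⟩, hodd⟩
      refine ⟨?_, hodd⟩
      intro hcr; subst hcr
      rw [(hT.isConnected.dist_eq_zero_iff).2 rfl] at hdist; omega
    · rintro ⟨hcr, hodd⟩
      obtain ⟨v, hv1, hv2⟩ := exists_parent hT r hcr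
      exact ⟨v, ⟨hv1, hv2⟩, hodd⟩
  calc ∑ v : V, oddChildCount T r A v
      = ∑ v : V, ((children T r v).filter
        (fun c => Odd ((A.filter (fun u => Sub T r c u)).card))).card := by
        exact Finset.sum_congr rfl (fun v _ => hS v)
    _ = (oddSet T r A).card := by rw [← hbi, Finset.card_biUnion hdisj]

/-- subtree partition into children subtrees -/
lemma card_filter_sub (A : Finset V) (v : V) :
    (A.filter (fun u => Sub T r v u)).card =
      (if v ∈ A then 1 else 0) +
        ∑ c ∈ children T r v, (A.filter (fun u => Sub T r c u)).card := by
  classical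
  have hsplit : A.filter (fun u => Sub T r v u) =
      (A.filter (fun u => u = v)) ∪ (children T r v).biUnion
        (fun c => A.filter (fun u => Sub T r c u)) := by
    ext u
    simp only [mem_filter, mem_union, mem_biUnion, mem_children]
    constructor
    · rintro ⟨huA, hsub⟩
      by_cases huv : u = v
      · exact Or.inl ⟨huA, huv⟩
      · refine Or.inr ?_
        set w := gp hT r u with hw
        have hwp : w.IsPath := gp_isPath hT r u
        have hwl : w.length = T.dist r u := gp_length hT r u
        have hvv : T.dist v u ≠ 0 := fun hh => huv (dist_eq_zero hT hh).symm
        have hi : T.dist r v + 1 ≤ w.length := by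
          simp only [Sub] at hsub; omega
        set c := w.getVert (T.dist r v + 1) with hc
        have hvert : w.getVert (T.dist r v) = v := getvert_eq hT r w hwp v hsub
        have hadj : T.Adj v c := by
          have := w.adj_getVert_succ (i := T.dist r v) (by omega)
          rwa [hvert] at this
        have hdc := (geov hT w hwl (T.dist r v + 1) hi).1
        have hcu := (geov hT w hwl (T.dist r v + 1) hi).2
        rw [← hc] at hdc hcu
        refine ⟨c, ⟨hadj, hdc⟩, huA, ?_⟩
        simp only [Sub] at *
        omega
    · rintro (⟨huA, rfl⟩ | ⟨c, ⟨hadj, hdist⟩, huA, hsub⟩)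
      · exact ⟨huA, sub_self T r _⟩
      · refine ⟨huA, ?_⟩
        have hvc : Sub T r v c := by
          have h1 : T.dist v c ≤ 1 := by
            have := dist_le (Walk.cons hadj Walk.nil); simpa using this
          have h2 : T.dist v c ≠ 0 := fun hh => hadj.ne (dist_eq_zero hT hh)
          simp only [Sub]; omega
        exact sub_trans hT r hvc hsub
  have hdisj2 : Disjoint (A.filter (fun u => u = v))
      ((children T r v).biUnion (fun c => A.filter (fun u => Sub T r c u))) := by
    rw [Finset.disjoint_left]
    rintro u h1 h2
    rw [mem_filter] at h1
    obtain ⟨-, rfl⟩ := h1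
    rw [mem_biUnion] at h2
    obtain ⟨c, hc, h3⟩ := h2
    rw [mem_filter] at h3
    rw [mem_children] at hc
    have := h3.2
    simp only [Sub] at this
    omega
  have hdisj3 : ∀ c1 ∈ children T r v, ∀ c2 ∈ children T r v, c1 ≠ c2 →
      Disjoint (A.filter (fun u => Sub T r c1 u)) (A.filter (fun u => Sub T r c2 u)) := by
    intro c1 hc1 c2 hc2 hne
    rw [Finset.disjoint_left]
    intro u h1 h2
    rw [mem_filter] at h1 h2
    rw [mem_children] at hc1 hc2
    exact hne (sub_eq_of_dist_eq hT r h1.2 h2.2 (by omega))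
  rw [hsplit, card_union_of_disjoint hdisj2, Finset.card_biUnion hdisj3,
    Finset.filter_eq' A v]
  by_cases hv : v ∈ A <;> simp [hv]

omit hT in
lemma card_filter_erase2 {A : Finset V} {a b : V} (ha : a ∈ A) (hb : b ∈ A) (hab : a ≠ b)
    (P : V → Prop) [DecidablePred P] :
    (((A.erase a).erase b).filter P).card + (if P a then 1 else 0) + (if P b then 1 else 0)
      = (A.filter P).card := by
  rw [Finset.filter_erase, Finset.filter_erase]
  by_cases hPa : P a <;> by_cases hPb : P b
  · have hbm : b ∈ (A.filter P).erase a := by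
      rw [mem_erase, mem_filter]; exact ⟨hab.symm, hb, hPb⟩
    have ham : a ∈ A.filter P := by rw [mem_filter]; exact ⟨ha, hPa⟩
    rw [Finset.card_erase_of_mem hbm, Finset.card_erase_of_mem ham]
    have h1 : 1 ≤ (A.filter P).card := Finset.card_pos.2 ⟨a, ham⟩
    have h2 : 1 ≤ ((A.filter P).erase a).card := Finset.card_pos.2 ⟨b, hbm⟩
    rw [Finset.card_erase_of_mem ham] at h2
    simp only [if_pos hPa, if_pos hPb]
    omega
  · have ham : a ∈ A.filter P := by rw [mem_filter]; exact ⟨ha, hPa⟩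
    have hbm : b ∉ (A.filter P).erase a := by
      rw [mem_erase, mem_filter]; tauto
    rw [Finset.erase_eq_of_notMem hbm, Finset.card_erase_of_mem ham]
    have h1 : 1 ≤ (A.filter P).card := Finset.card_pos.2 ⟨a, ham⟩
    simp only [if_pos hPa, if_neg hPb]
    omega
  · have hbm : b ∈ A.filter P := by rw [mem_filter]; exact ⟨hb, hPb⟩
    have ham : a ∉ A.filter P := by rw [mem_filter]; tauto
    rw [Finset.erase_eq_of_notMem ham, Finset.card_erase_of_mem hbm]
    have h1 : 1 ≤ (A.filter P).card := Finset.card_pos.2 ⟨b, hbm⟩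
    simp only [if_neg hPa, if_pos hPb]
    omega
  · have hbm : b ∉ A.filter P := by rw [mem_filter]; tauto
    have ham : a ∉ A.filter P := by rw [mem_filter]; tauto
    rw [Finset.erase_eq_of_notMem ham, Finset.erase_eq_of_notMem hbm]
    simp only [if_neg hPa, if_neg hPb]
    omega

omit hT in
lemma oddSet_erase {A : Finset V} {a b : V} (ha : a ∈ A) (hb : b ∈ A) (hab : a ≠ b)
    (hD : Dset T r a b ⊆ oddSet T r A) :
    oddSet T r ((A.erase a).erase b) = oddSet T r A \ Dset T r a b := by
  classical
  ext c
  by_cases hcr : c = r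
  · subst hcr
    simp [mem_oddSet, mem_sdiff]
  · have key := card_filter_erase2 ha hb hab (fun u => Sub T r c u)
    rw [mem_oddSet, mem_sdiff, mem_oddSet, mem_Dset]
    simp only [Nat.odd_iff] at *
    by_cases hiff : Sub T r c a ↔ Sub T r c b
    · by_cases hsa : Sub T r c a
      · have hsb : Sub T r c b := hiff.1 hsa
        simp only [if_pos hsa, if_pos hsb] at key
        constructor
        · rintro ⟨-, hodd⟩
          exact ⟨⟨hcr, by omega⟩, by tauto⟩
        · rintro ⟨⟨-, hodd⟩, -⟩
          exact ⟨hcr, by omega⟩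
      · have hsb : ¬ Sub T r c b := fun hh => hsa (hiff.2 hh)
        simp only [if_neg hsa, if_neg hsb] at key
        constructor
        · rintro ⟨-, hodd⟩
          exact ⟨⟨hcr, by omega⟩, by tauto⟩
        · rintro ⟨⟨-, hodd⟩, -⟩
          exact ⟨hcr, by omega⟩
    · have hcD : c ∈ Dset T r a b := by rw [mem_Dset]; exact ⟨hcr, hiff⟩
      have hodd : ((A.filter (fun u => Sub T r c u)).card) % 2 = 1 := by
        have := hD hcD
        rw [mem_oddSet, Nat.odd_iff] at this
        exact this.2
      have hdiff : (if Sub T r c a then 1 else 0) + (if Sub T r c b then 1 else 0) = 1 := by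
        by_cases hsa : Sub T r c a <;> by_cases hsb : Sub T r c b <;> simp [hsa, hsb] at * <;> tauto
      constructor
      · rintro ⟨-, hodd'⟩
        omega
      · rintro ⟨-, hnD⟩
        exact absurd ⟨hcr, hiff⟩ hnD


/-- chain lemma: among ancestors of `a`, smaller depth means ancestor -/
lemma sub_chain {x y a : V} (hxa : Sub T r x a) (hya : Sub T r y a)
    (hxy : T.dist r x ≤ T.dist r y) : Sub T r x y := by
  set w := gp hT r a with hw
  have hwp : w.IsPath := gp_isPath hT r a
  have hwl : w.length = T.dist r a := gp_length hT r a
  have hx := getvert_eq hT r w hwp x hxa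
  have hy := getvert_eq hT r w hwp y hya
  have hylen : T.dist r y ≤ w.length := by simp only [Sub] at hya; omega
  have := geov2 hT w hwl (T.dist r x) (T.dist r y) hxy hylen
  rw [hx, hy] at this
  simp only [Sub]; omega

lemma sub_parent {c : V} (hcr : c ≠ r) : Sub T r (par T r c) c := by
  obtain ⟨hadj, hdist⟩ := par_spec hT r hcr
  have h1 : T.dist (par T r c) c ≤ 1 := by
    have := dist_le (Walk.cons hadj Walk.nil); simpa using this
  have h2 : T.dist (par T r c) c ≠ 0 := fun hh => hadj.ne (dist_eq_zero hT hh)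
  simp only [Sub]; omega

lemma sub_adj_child {v c : V} (hadj : T.Adj v c) (hdist : T.dist r c = T.dist r v + 1) :
    Sub T r v c := by
  have h1 : T.dist v c ≤ 1 := by
    have := dist_le (Walk.cons hadj Walk.nil); simpa using this
  have h2 : T.dist v c ≠ 0 := fun hh => hadj.ne (dist_eq_zero hT hh)
  simp only [Sub]; omega

/-- separating vertices between `a` and the parent of `c` are below `c` (and above `a`),
when `c` is an ancestor of `a`. -/
lemma Dsub {c a v : V} (hcr : c ≠ r) (hca : Sub T r c a) (hv : v = par T r c) :
    ∀ c' ∈ Dset T r a v, Sub T r c c' ∧ Sub T r c' a := by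
  intro c' hc'
  rw [mem_Dset] at hc'
  obtain ⟨hc'r, hxor⟩ := hc'
  obtain ⟨hadj, hdist⟩ := par_spec hT r hcr
  rw [← hv] at hadj hdist
  have hvc : Sub T r v c := hv ▸ sub_parent hT r hcr
  have hva : Sub T r v a := sub_trans hT r hvc hca
  have hnc'v : ¬ Sub T r c' v := by
    intro hs
    exact hxor ⟨fun _ => hs, fun _ => sub_trans hT r hs hva⟩
  have hc'a : Sub T r c' a := by
    by_contra hno
    exact hxor ⟨fun hh => absurd hh hno, fun hh => absurd hh hnc'v⟩
  have hdepth : T.dist r c ≤ T.dist r c' := by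
    by_contra hlt
    exact hnc'v (sub_chain hT r hc'a hva (by omega))
  exact ⟨sub_chain hT r hca hc'a hdepth, hc'a⟩

lemma down (A : Finset V) : ∀ (n : ℕ) (c : V), Fintype.card V ≤ T.dist r c + n →
    c ∈ oddSet T r A →
    ∃ a ∈ A, Sub T r c a ∧
      (∀ c', c' ≠ c → Sub T r c c' → Sub T r c' a → c' ∈ oddSet T r A) := by
  intro n
  induction n with
  | zero =>
    intro c hcard hodd
    exfalso
    have := (gp_isPath hT r c).length_lt
    rw [gp_length] at this
    omega
  | succ n ih =>
    intro c hcard hodd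
    obtain ⟨hcr, hoddc⟩ := (mem_oddSet r).1 hodd
    by_cases hcA : c ∈ A
    · refine ⟨c, hcA, sub_self T r c, ?_⟩
      intro c' hne h1 h2
      exfalso
      simp only [Sub] at h1 h2
      exact hne (dist_eq_zero hT (show T.dist c c' = 0 by omega)).symm
    · have hkey := card_filter_sub hT r A c
      rw [if_neg hcA, zero_add] at hkey
      have hsum : ¬ Even (∑ c' ∈ children T r c, (A.filter (fun u => Sub T r c' u)).card) := by
        rw [← hkey]
        exact Nat.not_even_iff_odd.2 hoddc
      rw [Finset.even_sum_iff_even_card_odd] at hsum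
      have hne : ((children T r c).filter
          (fun c' => Odd ((A.filter (fun u => Sub T r c' u)).card))).Nonempty := by
        rw [Finset.nonempty_iff_ne_empty]
        intro h
        rw [h] at hsum
        simp at hsum
      obtain ⟨ch, hch⟩ := hne
      rw [mem_filter, mem_children] at hch
      obtain ⟨⟨hadj, hdist⟩, hchodd⟩ := hch
      have hchr : ch ≠ r := by
        intro h; subst h
        rw [SimpleGraph.dist_self] at hdist; omega
      have hchodd' : ch ∈ oddSet T r A := (mem_oddSet r).2 ⟨hchr, hchodd⟩
      obtain ⟨a, haA, hsub, hbetween⟩ := ih ch (by omega) hchodd'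
      have hsubch : Sub T r c ch := sub_adj_child hT r hadj hdist
      refine ⟨a, haA, sub_trans hT r hsubch hsub, ?_⟩
      intro c' hne h1 h2
      by_cases hc' : c' = ch
      · subst hc'; exact hchodd'
      · refine hbetween c' hc' ?_ h2
        have hd : T.dist r ch ≤ T.dist r c' := by
          simp only [Sub] at h1
          have : T.dist c c' ≠ 0 := fun hh => hne (dist_eq_zero hT hh).symm
          omega
        exact sub_chain hT r hsub h2 hd

lemma up (A : Finset V) (heven : Even A.card) : ∀ (n : ℕ) (c : V), T.dist r c ≤ n →
    c ∈ oddSet T r A →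
    (∃ a ∈ A, Sub T r c a ∧
      (∀ c', c' ≠ c → Sub T r c c' → Sub T r c' a → c' ∈ oddSet T r A)) →
    ∃ p ∈ A, ∃ q ∈ A, p ≠ q ∧ Dset T r p q ⊆ oddSet T r A := by
  intro n
  induction n with
  | zero =>
    intro c h0 hodd _
    exact absurd (dist_eq_zero hT (Nat.le_zero.1 h0)).symm ((mem_oddSet r).1 hodd).1
  | succ n ih =>
    rintro c hn hodd ⟨a, haA, hca, hbet⟩
    have hcr := ((mem_oddSet r).1 hodd).1
    obtain ⟨hadj, hdist⟩ := par_spec hT r hcr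
    have hDav : ∀ c' ∈ Dset T r a (par T r c), Sub T r c c' ∧ Sub T r c' a :=
      Dsub hT r hcr hca rfl
    have hDsubOdd : Dset T r a (par T r c) ⊆ oddSet T r A := by
      intro c' hc'
      obtain ⟨h1, h2⟩ := hDav c' hc'
      by_cases hcc : c' = c
      · subst hcc; exact hodd
      · exact hbet c' hcc h1 h2
    have hane : a ≠ par T r c := by
      intro h
      rw [h] at hca
      simp only [Sub] at hca
      omega
    by_cases hvA : par T r c ∈ A
    · exact ⟨a, haA, par T r c, hvA, hane, hDsubOdd⟩
    · by_cases hc2 : ∃ c2 ∈ children T r (par T r c), c2 ≠ c ∧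
          Odd ((A.filter (fun u => Sub T r c2 u)).card)
      · obtain ⟨c2, hc2m, hc2ne, hc2odd⟩ := hc2
        rw [mem_children] at hc2m
        have hc2r : c2 ≠ r := by
          intro h; subst h
          rw [SimpleGraph.dist_self] at hc2m; omega
        have hc2oddSet : c2 ∈ oddSet T r A := (mem_oddSet r).2 ⟨hc2r, hc2odd⟩
        obtain ⟨b, hbA, hc2b, hbet2⟩ :=
          down hT r A (Fintype.card V) c2 (by omega) hc2oddSet
        have hab : a ≠ b := by
          intro h
          rw [← h] at hc2b
          exact hc2ne (sub_eq_of_dist_eq hT r hc2b hca (by omega))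
        have hvpar2 : par T r c = par T r c2 := (par_eq hT r hc2m.1 hc2m.2).symm
        have hDbv : ∀ c' ∈ Dset T r b (par T r c), Sub T r c2 c' ∧ Sub T r c' b :=
          Dsub hT r hc2r hc2b hvpar2
        have hDbOdd : Dset T r b (par T r c) ⊆ oddSet T r A := by
          intro c' hc'
          obtain ⟨h1, h2⟩ := hDbv c' hc'
          by_cases hcc : c' = c2
          · subst hcc; exact hc2oddSet
          · exact hbet2 c' hcc h1 h2
        refine ⟨a, haA, b, hbA, hab, ?_⟩
        intro c' hc'
        rw [mem_Dset] at hc'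
        obtain ⟨hc'r, hxor⟩ := hc'
        have : ¬(Sub T r c' a ↔ Sub T r c' (par T r c)) ∨
            ¬(Sub T r c' b ↔ Sub T r c' (par T r c)) := by tauto
        rcases this with h | h
        · exact hDsubOdd ((mem_Dset r).2 ⟨hc'r, h⟩)
        · exact hDbOdd ((mem_Dset r).2 ⟨hc'r, h⟩)
      · push_neg at hc2
        have hvodd : Odd ((A.filter (fun u => Sub T r (par T r c) u)).card) := by
          have hkey := card_filter_sub hT r A (par T r c)
          rw [if_neg hvA, zero_add] at hkey
          have hcch : c ∈ children T r (par T r c) := (mem_children r).2 ⟨hadj, hdist⟩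
          have hfilt : (children T r (par T r c)).filter
              (fun c' => Odd ((A.filter (fun u => Sub T r c' u)).card)) = {c} := by
            ext c''
            simp only [mem_filter, Finset.mem_singleton]
            constructor
            · rintro ⟨hm, hoddc⟩
              by_contra hne
              exact (hc2 c'' hm hne) hoddc
            · rintro rfl
              exact ⟨hcch, ((mem_oddSet r).1 hodd).2⟩
          rw [hkey, Nat.odd_iff, ← Nat.not_even_iff]
          rw [Finset.even_sum_iff_even_card_odd, hfilt]
          simp
        have hvr : par T r c ≠ r := by
          intro h
          rw [h] at hvodd
          rw [Finset.filter_true_of_mem (fun u _ => sub_root T r u)] at hvodd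
          exact (Nat.not_even_iff_odd.2 hvodd) heven
        have hvoddSet : par T r c ∈ oddSet T r A := (mem_oddSet r).2 ⟨hvr, hvodd⟩
        have hvc : Sub T r (par T r c) c := sub_parent hT r hcr
        have hva : Sub T r (par T r c) a := sub_trans hT r hvc hca
        refine ih (par T r c) (by omega) hvoddSet ⟨a, haA, hva, ?_⟩
        intro c' hne hvc' hc'a
        by_cases hcc : c' = c
        · subst hcc; exact hodd
        · have hd : T.dist r c ≤ T.dist r c' := by
            simp only [Sub] at hvc'
            have : T.dist (par T r c) c' ≠ 0 := fun hh => hne (dist_eq_zero hT hh).symm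
            omega
          exact hbet c' hcc (sub_chain hT r hca hc'a hd) hc'a

lemma find_pair (A : Finset V) (hA : A.Nonempty) (heven : Even A.card) :
    ∃ p ∈ A, ∃ q ∈ A, p ≠ q ∧ Dset T r p q ⊆ oddSet T r A := by
  obtain ⟨a0, ha0A, hmax⟩ := Finset.exists_max_image A (fun u => T.dist r u) hA
  have ha0r : a0 ≠ r := by
    intro h
    have hall : ∀ u ∈ A, u = a0 := by
      intro u hu
      have h1 := hmax u hu
      rw [h, SimpleGraph.dist_self] at h1
      exact (dist_eq_zero hT (Nat.le_zero.1 h1)).symm.trans h.symm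
    have hA1 : A = {a0} := by
      apply Finset.Subset.antisymm
      · intro u hu; rw [Finset.mem_singleton]; exact hall u hu
      · intro u hu; rw [Finset.mem_singleton] at hu; subst hu; exact ha0A
    rw [hA1] at heven
    simp at heven
  have hfilter : A.filter (fun u => Sub T r a0 u) = {a0} := by
    ext u
    simp only [mem_filter, Finset.mem_singleton]
    constructor
    · rintro ⟨huA, hsub⟩
      by_contra hne
      have := hmax u huA
      simp only [Sub] at hsub
      have : T.dist a0 u ≠ 0 := fun hh => hne (dist_eq_zero hT hh).symm
      omega
    · rintro rfl
      exact ⟨ha0A, sub_self T r _⟩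
  have ha0odd : a0 ∈ oddSet T r A := by
    refine (mem_oddSet r).2 ⟨ha0r, ?_⟩
    rw [hfilter]
    simp
  refine up hT r A heven (T.dist r a0) a0 le_rfl ha0odd ⟨a0, ha0A, sub_self T r a0, ?_⟩
  intro c' hne h1 h2
  exfalso
  simp only [Sub] at h1 h2
  exact hne (dist_eq_zero hT (show T.dist a0 c' = 0 by omega)).symm


lemma rep_inj {c c' : V} (h1 : T.dist r c = T.dist r (par T r c) + 1)
    (h2 : T.dist r c' = T.dist r (par T r c') + 1)
    (he : s(c, par T r c) = s(c', par T r c')) : c = c' := by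
  rw [Sym2.eq_iff] at he
  rcases he with ⟨hc, -⟩ | ⟨hc, hp⟩
  · exact hc
  · exfalso; rw [hp] at h1; rw [← hc] at h2; omega

/-- edges of the geodesic between `a` and `b` are represented by `Dset` elements -/
lemma gp_edge_rep (a b : V) :
    ∀ e ∈ (gp hT a b).edges, ∃ c ∈ Dset T r a b,
      T.dist r c = T.dist r (par T r c) + 1 ∧ e = s(c, par T r c) := by
  intro e he
  have heS : e ∈ T.edgeSet := (gp hT a b).edges_subset_edgeSet he
  obtain ⟨c, hcr, hpar, hadj, rfl⟩ := edge_repr hT r heS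
  refine ⟨c, ?_, hpar, rfl⟩
  rw [mem_Dset]
  exact ⟨hcr, (edges_iff hT r (gp hT a b) (gp_isPath hT a b) (gp_length hT a b) hcr hpar).1 he⟩

lemma main : ∀ (n : ℕ) (A : Finset V), A.card ≤ n → Even A.card →
    ∃ σ : V → V,
      (∀ a ∈ A, σ a ∈ A ∧ σ a ≠ a ∧ σ (σ a) = a) ∧
      (∑ a ∈ A, T.dist a (σ a)) = 2 * (oddSet T r A).card ∧
      ∃ P : (a : V) → T.Walk a (σ a),
        (∀ a ∈ A, (P a).IsPath) ∧
        (∀ a ∈ A, ∀ e ∈ (P a).edges, ∃ c ∈ oddSet T r A,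
          T.dist r c = T.dist r (par T r c) + 1 ∧ e = s(c, par T r c)) ∧
        (∀ a ∈ A, ∀ b ∈ A, b ≠ a → b ≠ σ a →
          ∀ e ∈ (P a).edges, e ∉ (P b).edges) := by
  intro n
  induction n with
  | zero =>
    intro A hcard _
    rw [Nat.le_zero, Finset.card_eq_zero] at hcard
    subst hcard
    refine ⟨id, by simp, by simp [oddSet_empty], fun a => Walk.nil, by simp, by simp, by simp⟩
  | succ n ih =>
    intro A hcard heven
    rcases A.eq_empty_or_nonempty with rfl | hA
    · refine ⟨id, by simp, by simp [oddSet_empty], fun a => Walk.nil, by simp, by simp, by simp⟩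
    · obtain ⟨a, haA, b, hbA, hab, hD⟩ := find_pair hT r A hA heven
      have hbea : b ∈ A.erase a := Finset.mem_erase.2 ⟨Ne.symm hab, hbA⟩
      have hcard2 : 2 ≤ A.card := Finset.one_lt_card.2 ⟨a, haA, b, hbA, hab⟩
      have hcardA' : ((A.erase a).erase b).card + 2 = A.card := by
        rw [Finset.card_erase_of_mem hbea, Finset.card_erase_of_mem haA]
        omega
      have heven' : Even ((A.erase a).erase b).card := by
        obtain ⟨k, hk⟩ := heven
        exact ⟨k - 1, by omega⟩
      have memA' : ∀ x, x ∈ (A.erase a).erase b ↔ x ∈ A ∧ x ≠ a ∧ x ≠ b := by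
        intro x
        simp only [Finset.mem_erase]
        tauto
      obtain ⟨σ', hinv', hsum', P', hpath', hrep', hdisj'⟩ :=
        ih ((A.erase a).erase b) (by omega) heven'
      have hOdd' : oddSet T r ((A.erase a).erase b) = oddSet T r A \ Dset T r a b :=
        oddSet_erase r haA hbA hab hD
      have hDcard : (Dset T r a b).card = T.dist a b := card_Dset hT r a b
      have hDle : T.dist a b ≤ (oddSet T r A).card := by
        rw [← hDcard]; exact Finset.card_le_card hD
      have hOddCard : (oddSet T r ((A.erase a).erase b)).card
          = (oddSet T r A).card - T.dist a b := by
        rw [hOdd', Finset.card_sdiff_of_subset hD, hDcard]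
      set σ : V → V := fun x => if x = a then b else if x = b then a else σ' x with hσ
      have hσa : σ a = b := by simp only [hσ, if_pos rfl]
      have hσb : σ b = a := by
        simp only [hσ]; rw [if_neg (Ne.symm hab)]; simp
      have hσo : ∀ x, x ≠ a → x ≠ b → σ x = σ' x := by
        intro x h1 h2; simp only [hσ]; rw [if_neg h1, if_neg h2]
      have hinv : ∀ x ∈ A, σ x ∈ A ∧ σ x ≠ x ∧ σ (σ x) = x := by
        intro x hx
        by_cases hxa : x = a
        · subst hxa
          rw [hσa]
          exact ⟨hbA, Ne.symm hab, by rw [hσb]⟩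
        · by_cases hxb : x = b
          · subst hxb
            rw [hσb]
            exact ⟨haA, hab, by rw [hσa]⟩
          · have hxA' : x ∈ (A.erase a).erase b := (memA' x).2 ⟨hx, hxa, hxb⟩
            obtain ⟨h1, h2, h3⟩ := hinv' x hxA'
            obtain ⟨hs1, hs2, hs3⟩ := (memA' (σ' x)).1 h1
            rw [hσo x hxa hxb]
            refine ⟨hs1, h2, ?_⟩
            rw [hσo (σ' x) hs2 hs3]
            exact h3
      refine ⟨σ, hinv, ?_, ?_⟩
      · -- sum clause
        have e1 : ∑ x ∈ A, T.dist x (σ x)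
            = T.dist a (σ a) + ∑ x ∈ A.erase a, T.dist x (σ x) :=
          (Finset.add_sum_erase A (fun x => T.dist x (σ x)) haA).symm
        have e2 : ∑ x ∈ A.erase a, T.dist x (σ x)
            = T.dist b (σ b) + ∑ x ∈ (A.erase a).erase b, T.dist x (σ x) :=
          (Finset.add_sum_erase _ (fun x => T.dist x (σ x)) hbea).symm
        have e3 : ∑ x ∈ (A.erase a).erase b, T.dist x (σ x)
            = ∑ x ∈ (A.erase a).erase b, T.dist x (σ' x) := by
          apply Finset.sum_congr rfl
          intro x hx
          obtain ⟨-, h1, h2⟩ := (memA' x).1 hx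
          rw [hσo x h1 h2]
        have e4 : T.dist b (σ b) = T.dist a b := by rw [hσb, SimpleGraph.dist_comm]
        rw [e1, e2, e3, e4, hσa, hsum', hOddCard]
        omega
      · -- the path system
        obtain ⟨P, hPpair, hPoth⟩ : ∃ P : (x : V) → T.Walk x (σ x),
            (∀ x, (x = a ∨ x = b) → P x = gp hT x (σ x)) ∧
            (∀ x (h1 : x ≠ a) (h2 : x ≠ b), P x = (P' x).copy rfl (hσo x h1 h2).symm) := by
          refine ⟨fun x => if h : x = a ∨ x = b then gp hT x (σ x)
            else (P' x).copy rfl (hσo x (fun hh => h (Or.inl hh))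
              (fun hh => h (Or.inr hh))).symm, ?_, ?_⟩
          · intro x h; exact dif_pos h
          · intro x h1 h2; exact dif_neg (not_or.mpr ⟨h1, h2⟩)
        refine ⟨P, ?_, ?_, ?_⟩
        · intro x hx
          by_cases h : x = a ∨ x = b
          · rw [hPpair x h]; exact gp_isPath hT x (σ x)
          · rw [hPoth x (fun hh => h (Or.inl hh)) (fun hh => h (Or.inr hh)),
              Walk.isPath_copy]
            exact hpath' x ((memA' x).2 ⟨hx, fun hh => h (Or.inl hh), fun hh => h (Or.inr hh)⟩)
        · -- representation clause
          intro x hx e he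
          by_cases h : x = a ∨ x = b
          · rw [hPpair x h] at he
            have hrep : ∃ c ∈ Dset T r a b,
                T.dist r c = T.dist r (par T r c) + 1 ∧ e = s(c, par T r c) := by
              rcases h with rfl | rfl
              · rw [hσa] at he
                exact gp_edge_rep hT r x b e he
              · rw [hσb] at he
                obtain ⟨c, hcD, h1, h2⟩ := gp_edge_rep hT r x a e he
                rw [mem_Dset] at hcD
                refine ⟨c, (mem_Dset r).2 ⟨hcD.1, fun hh => hcD.2 hh.symm⟩, h1, h2⟩
            obtain ⟨c, hcD, h1, h2⟩ := hrep
            exact ⟨c, hD hcD, h1, h2⟩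
          · rw [hPoth x (fun hh => h (Or.inl hh)) (fun hh => h (Or.inr hh)),
              Walk.edges_copy] at he
            obtain ⟨c, hc, h1, h2⟩ := hrep' x
              ((memA' x).2 ⟨hx, fun hh => h (Or.inl hh), fun hh => h (Or.inr hh)⟩) e he
            rw [hOdd'] at hc
            exact ⟨c, (Finset.mem_sdiff.1 hc).1, h1, h2⟩
        · -- edge-disjointness
          -- key: an edge of the new pair's geodesic cannot be an edge of an old path
          have key : ∀ e, (∃ c ∈ Dset T r a b,
                T.dist r c = T.dist r (par T r c) + 1 ∧ e = s(c, par T r c)) →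
              (∃ c ∈ oddSet T r ((A.erase a).erase b),
                T.dist r c = T.dist r (par T r c) + 1 ∧ e = s(c, par T r c)) → False := by
            rintro e ⟨c, hcD, hc1, hc2⟩ ⟨c', hc'O, hc'1, hc'2⟩
            have : c = c' := rep_inj hT r hc1 hc'1 (hc2.symm.trans hc'2)
            subst this
            rw [hOdd', Finset.mem_sdiff] at hc'O
            exact hc'O.2 hcD
          have hgp_rep : ∀ x, x = a ∨ x = b → ∀ e ∈ (gp hT x (σ x)).edges,
              ∃ c ∈ Dset T r a b,
                T.dist r c = T.dist r (par T r c) + 1 ∧ e = s(c, par T r c) := by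
            intro x h e he
            rcases h with rfl | rfl
            · rw [hσa] at he
              exact gp_edge_rep hT r x b e he
            · rw [hσb] at he
              obtain ⟨c, hcD, h1, h2⟩ := gp_edge_rep hT r x a e he
              rw [mem_Dset] at hcD
              exact ⟨c, (mem_Dset r).2 ⟨hcD.1, fun hh => hcD.2 hh.symm⟩, h1, h2⟩
          intro x hx y hy hyx hyσ e hex hey
          by_cases h1 : x = a ∨ x = b
          · rw [hPpair x h1] at hex
            have hya : y ≠ a := by
              rintro rfl
              rcases h1 with rfl | rfl
              · exact hyx rfl
              · rw [hσb] at hyσ; exact hyσ rfl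
            have hyb : y ≠ b := by
              rintro rfl
              rcases h1 with rfl | rfl
              · rw [hσa] at hyσ; exact hyσ rfl
              · exact hyx rfl
            rw [hPoth y hya hyb, Walk.edges_copy] at hey
            exact key e (hgp_rep x h1 e hex)
              (hrep' y ((memA' y).2 ⟨hy, hya, hyb⟩) e hey)
          · rw [hPoth x (fun hh => h1 (Or.inl hh)) (fun hh => h1 (Or.inr hh)),
              Walk.edges_copy] at hex
            have hxA' : x ∈ (A.erase a).erase b :=
              (memA' x).2 ⟨hx, fun hh => h1 (Or.inl hh), fun hh => h1 (Or.inr hh)⟩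
            by_cases h2 : y = a ∨ y = b
            · rw [hPpair y h2] at hey
              exact key e (hgp_rep y h2 e hey) (hrep' x hxA' e hex)
            · rw [hPoth y (fun hh => h2 (Or.inl hh)) (fun hh => h2 (Or.inr hh)),
                Walk.edges_copy] at hey
              have hyA' : y ∈ (A.erase a).erase b :=
                (memA' y).2 ⟨hy, fun hh => h2 (Or.inl hh), fun hh => h2 (Or.inr hh)⟩
              refine hdisj' x hxA' y hyA' hyx ?_ e hex hey
              rw [← hσo x (fun hh => h1 (Or.inl hh)) (fun hh => h1 (Or.inr hh))]
              exact hyσ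

end TP


open SimpleGraph in
/-- There is a pairing of `A` (a fixed-point-free involution `σ` of `A`) whose total
pairing distance attains the lower bound `Σ_v k(v)` (each pair counted twice in the sum
over `a ∈ A`), realized by pairwise edge-disjoint connecting paths. -/
theorem pairing_distance_attained
    {V : Type} [Fintype V] [DecidableEq V]
    (T : SimpleGraph V) [DecidableRel T.Adj] (hT : T.IsTree) (r : V)
    (A : Finset V) (hA : A.Nonempty) (heven : Even A.card) :
    ∃ σ : V → V,
      (∀ a ∈ A, σ a ∈ A ∧ σ a ≠ a ∧ σ (σ a) = a) ∧
      (∑ a ∈ A, T.dist a (σ a)) = 2 * ∑ v : V, oddChildCount T r A v ∧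
      ∃ P : (a : V) → T.Walk a (σ a),
        (∀ a ∈ A, (P a).IsPath) ∧
        (∀ a ∈ A, ∀ b ∈ A, b ≠ a → b ≠ σ a →
          ∀ e ∈ (P a).edges, e ∉ (P b).edges) := by
  obtain ⟨σ, hinv, hsum, P, hpath, hrep, hdisj⟩ := TP.main hT r A.card A le_rfl heven
  refine ⟨σ, hinv, ?_, P, hpath, hdisj⟩
  rw [hsum, TP.sum_oddChildCount hT r A]
end
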